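/- arXiv:1906.07472 — 6 statements merged into one kernel-verified Lean document; each statement's English description precedes it below -/
import Mathlib

section
/- In the degenerate affine periplectic Brauer algebra sVV_n (n ≥ 2), for every 1 ≤ i ≤ n−1 and all natural numbers a, b the following identities hold: (i) s_i·y_{i+1}^b·e_i = −y_{i+1}^b·e_i; (ii) s_i·y_i^a·e_i = −y_i^a·e_i; (iii) e_i·y_{i+1}^b·s_i = e_i·y_{i+1}^b; (iv) e_i·y_i^a·s_i = e_i·y_i^a; (v) e_i·y_i^a·y_{i+1}^b·s_i = Σ_{k=0}^{b} (b choose k)·e_i·y_i^{a+k}; (vi) s_i·y_i^a·y_{i+1}^b·e_i = −Σ_{k=0}^{a} (a choose k)·y_{i+1}^{b+k}·e_i. -/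
noncomputable section

namespace Periplectic

/-- Generators of the degenerate affine periplectic Brauer algebra on `n` strands:
`S i` for `1 ≤ i ≤ n-1`, `E i` for `1 ≤ i ≤ n-1`, `Y j` for `1 ≤ j ≤ n`. -/
inductive Gen (n : ℕ) : Type
  | S (i : ℕ) (h : 1 ≤ i ∧ i ≤ n - 1) : Gen n
  | E (i : ℕ) (h : 1 ≤ i ∧ i ≤ n - 1) : Gen n
  | Y (j : ℕ) (h : 1 ≤ j ∧ j ≤ n) : Gen n

/-- The free `ℂ`-algebra on the generators. -/
abbrev FA (n : ℕ) : Type := FreeAlgebra ℂ (Gen n)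

def fS (n i : ℕ) (h : 1 ≤ i ∧ i ≤ n - 1) : FA n := FreeAlgebra.ι ℂ (Gen.S i h)
def fE (n i : ℕ) (h : 1 ≤ i ∧ i ≤ n - 1) : FA n := FreeAlgebra.ι ℂ (Gen.E i h)
def fY (n j : ℕ) (h : 1 ≤ j ∧ j ≤ n) : FA n := FreeAlgebra.ι ℂ (Gen.Y j h)

/-- The defining relations of the degenerate affine periplectic Brauer algebra. -/
inductive Rel (n : ℕ) : FA n → FA n → Prop
  /- (VV1)  s_i² = 1 -/
  | s_sq (i : ℕ) (h : 1 ≤ i ∧ i ≤ n - 1) :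
      Rel n (fS n i h * fS n i h) 1
  /- (VV2)(i)  s_i e_j = e_j s_i for |i-j| > 1 -/
  | se_comm (i j : ℕ) (hi : 1 ≤ i ∧ i ≤ n - 1) (hj : 1 ≤ j ∧ j ≤ n - 1)
      (hij : i + 1 < j ∨ j + 1 < i) :
      Rel n (fS n i hi * fE n j hj) (fE n j hj * fS n i hi)
  /- (VV2)(ii)  e_i e_j = e_j e_i for |i-j| > 1 -/
  | ee_comm (i j : ℕ) (hi : 1 ≤ i ∧ i ≤ n - 1) (hj : 1 ≤ j ∧ j ≤ n - 1)
      (hij : i + 1 < j ∨ j + 1 < i) :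
      Rel n (fE n i hi * fE n j hj) (fE n j hj * fE n i hi)
  /- (VV2)(iii)  e_i y_j = y_j e_i for j ∉ {i, i+1} -/
  | ey_comm (i j : ℕ) (hi : 1 ≤ i ∧ i ≤ n - 1) (hj : 1 ≤ j ∧ j ≤ n)
      (hij : j ≠ i ∧ j ≠ i + 1) :
      Rel n (fE n i hi * fY n j hj) (fY n j hj * fE n i hi)
  /- (VV2)(iv)  y_i y_j = y_j y_i -/
  | yy_comm (i j : ℕ) (hi : 1 ≤ i ∧ i ≤ n) (hj : 1 ≤ j ∧ j ≤ n) :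
      Rel n (fY n i hi * fY n j hj) (fY n j hj * fY n i hi)
  /- (VV3)(i)  s_i s_j = s_j s_i for |i-j| > 1 -/
  | ss_comm (i j : ℕ) (hi : 1 ≤ i ∧ i ≤ n - 1) (hj : 1 ≤ j ∧ j ≤ n - 1)
      (hij : i + 1 < j ∨ j + 1 < i) :
      Rel n (fS n i hi * fS n j hj) (fS n j hj * fS n i hi)
  /- (VV3)(ii)  braid relation -/
  | braid (i : ℕ) (hi : 1 ≤ i ∧ i ≤ n - 1) (hi1 : 1 ≤ i + 1 ∧ i + 1 ≤ n - 1) :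
      Rel n (fS n i hi * fS n (i+1) hi1 * fS n i hi)
            (fS n (i+1) hi1 * fS n i hi * fS n (i+1) hi1)
  /- (VV3)(iii)  s_i y_j = y_j s_i for j ∉ {i, i+1} -/
  | sy_comm (i j : ℕ) (hi : 1 ≤ i ∧ i ≤ n - 1) (hj : 1 ≤ j ∧ j ≤ n)
      (hij : j ≠ i ∧ j ≠ i + 1) :
      Rel n (fS n i hi * fY n j hj) (fY n j hj * fS n i hi)
  /- (VV4)(i)  e_{i+1} e_i e_{i+1} = -e_{i+1} -/
  | eee_up (i : ℕ) (hi : 1 ≤ i ∧ i ≤ n - 1) (hi1 : 1 ≤ i + 1 ∧ i + 1 ≤ n - 1) :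
      Rel n (fE n (i+1) hi1 * fE n i hi * fE n (i+1) hi1) (-(fE n (i+1) hi1))
  /- (VV4)(ii)  e_i e_{i+1} e_i = -e_i -/
  | eee_down (i : ℕ) (hi : 1 ≤ i ∧ i ≤ n - 1) (hi1 : 1 ≤ i + 1 ∧ i + 1 ≤ n - 1) :
      Rel n (fE n i hi * fE n (i+1) hi1 * fE n i hi) (-(fE n i hi))
  /- (VV5)(i)  e_i s_i = e_i  and  s_i e_i = -e_i -/
  | es (i : ℕ) (hi : 1 ≤ i ∧ i ≤ n - 1) :
      Rel n (fE n i hi * fS n i hi) (fE n i hi)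
  | se (i : ℕ) (hi : 1 ≤ i ∧ i ≤ n - 1) :
      Rel n (fS n i hi * fE n i hi) (-(fE n i hi))
  /- (VV5)(ii)  s_i e_{i+1} e_i = s_{i+1} e_i -/
  | see (i : ℕ) (hi : 1 ≤ i ∧ i ≤ n - 1) (hi1 : 1 ≤ i + 1 ∧ i + 1 ≤ n - 1) :
      Rel n (fS n i hi * fE n (i+1) hi1 * fE n i hi) (fS n (i+1) hi1 * fE n i hi)
  /- (VV5)(iii)  s_{i+1} e_i e_{i+1} = -s_i e_{i+1} -/
  | see' (i : ℕ) (hi : 1 ≤ i ∧ i ≤ n - 1) (hi1 : 1 ≤ i + 1 ∧ i + 1 ≤ n - 1) :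
      Rel n (fS n (i+1) hi1 * fE n i hi * fE n (i+1) hi1) (-(fS n i hi * fE n (i+1) hi1))
  /- (VV5)(iv)  e_{i+1} e_i s_{i+1} = e_{i+1} s_i -/
  | ees (i : ℕ) (hi : 1 ≤ i ∧ i ≤ n - 1) (hi1 : 1 ≤ i + 1 ∧ i + 1 ≤ n - 1) :
      Rel n (fE n (i+1) hi1 * fE n i hi * fS n (i+1) hi1) (fE n (i+1) hi1 * fS n i hi)
  /- (VV5)(v)  e_i e_{i+1} s_i = -e_i s_{i+1} -/
  | ees' (i : ℕ) (hi : 1 ≤ i ∧ i ≤ n - 1) (hi1 : 1 ≤ i + 1 ∧ i + 1 ≤ n - 1) :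
      Rel n (fE n i hi * fE n (i+1) hi1 * fS n i hi) (-(fE n i hi * fS n (i+1) hi1))
  /- (VV6)  e_i² = 0 -/
  | e_sq (i : ℕ) (hi : 1 ≤ i ∧ i ≤ n - 1) :
      Rel n (fE n i hi * fE n i hi) 0
  /- (VV7)(i)  s_i y_i - y_{i+1} s_i = -e_i - 1 -/
  | sy_rel (i : ℕ) (hi : 1 ≤ i ∧ i ≤ n - 1) (hyi : 1 ≤ i ∧ i ≤ n)
      (hyi1 : 1 ≤ i + 1 ∧ i + 1 ≤ n) :
      Rel n (fS n i hi * fY n i hyi - fY n (i+1) hyi1 * fS n i hi) (-(fE n i hi) - 1)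
  /- (VV7)(ii)  y_i s_i - s_i y_{i+1} = e_i - 1 -/
  | ys_rel (i : ℕ) (hi : 1 ≤ i ∧ i ≤ n - 1) (hyi : 1 ≤ i ∧ i ≤ n)
      (hyi1 : 1 ≤ i + 1 ∧ i + 1 ≤ n) :
      Rel n (fY n i hyi * fS n i hi - fS n i hi * fY n (i+1) hyi1) (fE n i hi - 1)
  /- (VV8)(i)  e_i (y_i - y_{i+1}) = -e_i -/
  | e_ydiff (i : ℕ) (hi : 1 ≤ i ∧ i ≤ n - 1) (hyi : 1 ≤ i ∧ i ≤ n)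
      (hyi1 : 1 ≤ i + 1 ∧ i + 1 ≤ n) :
      Rel n (fE n i hi * (fY n i hyi - fY n (i+1) hyi1)) (-(fE n i hi))
  /- (VV8)(ii)  (y_i - y_{i+1}) e_i = e_i -/
  | ydiff_e (i : ℕ) (hi : 1 ≤ i ∧ i ≤ n - 1) (hyi : 1 ≤ i ∧ i ≤ n)
      (hyi1 : 1 ≤ i + 1 ∧ i + 1 ≤ n) :
      Rel n ((fY n i hyi - fY n (i+1) hyi1) * fE n i hi) (fE n i hi)

/-- The degenerate affine periplectic Brauer algebra `sVV n`. -/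
abbrev sVV (n : ℕ) : Type := RingQuot (Rel n)

/-- The generator `s_i` of `sVV n`. -/
def sgen (n i : ℕ) (h : 1 ≤ i ∧ i ≤ n - 1) : sVV n :=
  RingQuot.mkAlgHom ℂ (Rel n) (fS n i h)

/-- The generator `e_i` of `sVV n`. -/
def egen (n i : ℕ) (h : 1 ≤ i ∧ i ≤ n - 1) : sVV n :=
  RingQuot.mkAlgHom ℂ (Rel n) (fE n i h)

/-- The generator `y_j` of `sVV n`. -/
def ygen (n j : ℕ) (h : 1 ≤ j ∧ j ≤ n) : sVV n :=
  RingQuot.mkAlgHom ℂ (Rel n) (fY n j h)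

/-- Total version of `s_i` (equal to `sgen n i _` when `1 ≤ i ≤ n-1`, and `0` otherwise). -/
def ss (n i : ℕ) : sVV n := if h : 1 ≤ i ∧ i ≤ n - 1 then sgen n i h else 0

/-- Total version of `e_i`. -/
def ee (n i : ℕ) : sVV n := if h : 1 ≤ i ∧ i ≤ n - 1 then egen n i h else 0

/-- Total version of `y_j`. -/
def yy (n j : ℕ) : sVV n := if h : 1 ≤ j ∧ j ≤ n then ygen n j h else 0

/-!
Only the relations among `s_i, e_i, y_i, y_{i+1}` are used. Since `e_i y_{i+1} = e_i (y_i + 1)`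
and `y_i, y_{i+1}` commute, `e_i y_i^a y_{i+1}^b` is the binomial combination
`∑ (b choose k) e_i y_i^(a+k)`, so (iii) and (v) reduce to (iv). Identity (iv) follows by induction
on `a` from `y_i s_i = s_i y_{i+1} + e_i - 1`; the induction step needs `e_i y_i^a e_i = 0`, and this
comes from (iv) itself: `e_i y_i^a e_i = e_i y_i^a s_i e_i = -e_i y_i^a e_i`, and `sVV n` has no
`2`-torsion. Finally (i), (ii), (vi) are the images of (iv), (iii), (v) under the
anti-involution `s_i ↦ -s_i, e_i ↦ e_i, y_i ↔ y_{i+1}`, which preserves these relations.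
-/

open MulOpposite

instance {M : Type*} [AddMonoid M] [IsAddTorsionFree M] : IsAddTorsionFree Mᵐᵒᵖ where
  nsmul_right_injective _ hn _ _ hab :=
    unop_injective (nsmul_right_injective hn (by simpa using congrArg unop hab))

/-- The relations of `sVV n` that involve only `s_i, e_i, y_i, y_{i+1}`, written for
`S, E, X, Z` respectively. -/
structure LocalRelations {A : Type*} [Ring A] (S E X Z : A) : Prop where
  e_mul_s : E * S = E
  s_mul_e : S * E = -E
  s_mul_x_sub_z_mul_s : S * X - Z * S = -E - 1
  x_mul_s_sub_s_mul_z : X * S - S * Z = E - 1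
  e_mul_x_sub_z : E * (X - Z) = -E
  x_sub_z_mul_e : (X - Z) * E = E
  commute_x_z : Commute X Z

namespace LocalRelations

variable {A : Type*} [Ring A] {S E X Z : A}

theorem op (h : LocalRelations S E X Z) : LocalRelations (op (-S)) (op E) (op Z) (op X) where
  e_mul_s := by rw [← op_mul, neg_mul, h.s_mul_e, neg_neg]
  s_mul_e := by rw [← op_mul, mul_neg, h.e_mul_s, op_neg]
  s_mul_x_sub_z_mul_s := by
    rw [← op_mul, ← op_mul, ← op_sub, mul_neg, neg_mul, sub_neg_eq_add, neg_add_eq_sub,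
      h.s_mul_x_sub_z_mul_s, op_sub, op_neg, op_one]
  x_mul_s_sub_s_mul_z := by
    rw [← op_mul, ← op_mul, ← op_sub, mul_neg, neg_mul, sub_neg_eq_add, neg_add_eq_sub,
      h.x_mul_s_sub_s_mul_z, op_sub, op_one]
  e_mul_x_sub_z := by rw [← op_sub, ← op_mul, ← neg_sub, neg_mul, h.x_sub_z_mul_e, op_neg]
  x_sub_z_mul_e := by rw [← op_sub, ← op_mul, ← neg_sub, mul_neg, h.e_mul_x_sub_z, neg_neg]
  commute_x_z := h.commute_x_z.symm.op

theorem x_mul_s (h : LocalRelations S E X Z) : X * S = S * Z + E - 1 := by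
  rw [← sub_add_cancel (X * S) (S * Z), h.x_mul_s_sub_s_mul_z]; abel

theorem e_mul_z (h : LocalRelations S E X Z) : E * Z = E * (X + 1) := by
  rw [mul_add_one, ← sub_sub_cancel (E * X) (E * Z), ← mul_sub, h.e_mul_x_sub_z]; abel

theorem e_mul_mul_e_eq_zero [IsAddTorsionFree A] (h : LocalRelations S E X Z) {W : A}
    (hW : E * W * S = E * W) : E * W * E = 0 := by
  rw [← two_nsmul_eq_zero, two_nsmul]
  nth_rw 1 [← hW]
  rw [mul_assoc _ S, h.s_mul_e, mul_neg, neg_add_cancel]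

theorem e_mul_z_pow (h : LocalRelations S E X Z) (q : ℕ) : E * Z ^ q = E * (X + 1) ^ q := by
  induction q with
  | zero => simp
  | succ q ih =>
    have hcomm : Commute ((X + 1) ^ q) Z :=
      (h.commute_x_z.add_left (Commute.one_left Z)).pow_left q
    rw [pow_succ, ← mul_assoc, ih, mul_assoc, hcomm.eq, ← mul_assoc, h.e_mul_z, mul_assoc,
      ← pow_succ']

theorem e_mul_x_pow_mul_z (h : LocalRelations S E X Z) (p : ℕ) :
    E * X ^ p * Z = E * X ^ (p + 1) + E * X ^ p := by
  rw [mul_assoc, (h.commute_x_z.pow_left p).eq, ← mul_assoc, h.e_mul_z, pow_succ']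
  noncomm_ring

theorem e_mul_x_pow_mul_z_pow (h : LocalRelations S E X Z) (a b : ℕ) :
    E * X ^ a * Z ^ b = ∑ k ∈ Finset.range (b + 1), b.choose k • (E * X ^ (a + k)) := by
  rw [mul_assoc, (h.commute_x_z.pow_pow a b).eq, ← mul_assoc, h.e_mul_z_pow,
    (Commute.one_right X).add_pow, Finset.mul_sum, Finset.sum_mul]
  refine Finset.sum_congr rfl fun k _ => ?_
  rw [one_pow, mul_one, nsmul_eq_mul, add_comm a, pow_add, ← mul_assoc E, ← Nat.cast_comm]
  simp only [mul_assoc]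

variable [IsAddTorsionFree A]

theorem e_mul_x_pow_mul_s (h : LocalRelations S E X Z) (p : ℕ) : E * X ^ p * S = E * X ^ p := by
  induction p with
  | zero => simpa using h.e_mul_s
  | succ p ih =>
    calc E * X ^ (p + 1) * S = E * X ^ p * (X * S) := by rw [pow_succ]; noncomm_ring
      _ = E * X ^ p * S * Z + E * X ^ p * E - E * X ^ p := by rw [h.x_mul_s]; noncomm_ring
      _ = E * X ^ p * Z - E * X ^ p := by rw [ih, h.e_mul_mul_e_eq_zero ih, add_zero]
      _ = E * X ^ (p + 1) := by rw [h.e_mul_x_pow_mul_z]; abel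

theorem e_mul_x_pow_mul_z_pow_mul_s (h : LocalRelations S E X Z) (a b : ℕ) :
    E * X ^ a * Z ^ b * S = ∑ k ∈ Finset.range (b + 1), b.choose k • (E * X ^ (a + k)) := by
  simp only [h.e_mul_x_pow_mul_z_pow, Finset.sum_mul, smul_mul_assoc, h.e_mul_x_pow_mul_s]

theorem e_mul_z_pow_mul_s (h : LocalRelations S E X Z) (b : ℕ) : E * Z ^ b * S = E * Z ^ b := by
  have h0 := h.e_mul_x_pow_mul_z_pow_mul_s 0 b
  rwa [← h.e_mul_x_pow_mul_z_pow, pow_zero, mul_one] at h0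

theorem s_mul_z_pow_mul_e (h : LocalRelations S E X Z) (b : ℕ) : S * Z ^ b * E = -(Z ^ b * E) := by
  apply op_injective
  simpa only [op_mul, op_pow, op_neg, op_smul, Finset.op_sum, mul_assoc, mul_neg, neg_mul,
    neg_eq_iff_eq_neg] using h.op.e_mul_x_pow_mul_s b

theorem s_mul_x_pow_mul_e (h : LocalRelations S E X Z) (a : ℕ) : S * X ^ a * E = -(X ^ a * E) := by
  apply op_injective
  simpa only [op_mul, op_pow, op_neg, op_smul, Finset.op_sum, mul_assoc, mul_neg, neg_mul,
    neg_eq_iff_eq_neg] using h.op.e_mul_z_pow_mul_s a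

theorem s_mul_x_pow_mul_z_pow_mul_e (h : LocalRelations S E X Z) (a b : ℕ) :
    S * X ^ a * Z ^ b * E = -∑ k ∈ Finset.range (a + 1), a.choose k • (Z ^ (b + k) * E) := by
  apply op_injective
  simpa only [op_mul, op_pow, op_neg, op_smul, Finset.op_sum, mul_assoc, mul_neg, neg_mul,
    neg_eq_iff_eq_neg] using h.op.e_mul_x_pow_mul_z_pow_mul_s b a

end LocalRelations

instance (n : ℕ) : IsAddTorsionFree (sVV n) := .of_isTorsionFree ℂ (sVV n)

theorem localRelations {n i : ℕ} (h : 1 ≤ i ∧ i ≤ n - 1) :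
    LocalRelations (ss n i) (ee n i) (yy n i) (yy n (i + 1)) := by
  have hx : 1 ≤ i ∧ i ≤ n := ⟨h.1, by omega⟩
  have hz : 1 ≤ i + 1 ∧ i + 1 ≤ n := ⟨by omega, by omega⟩
  simp only [ss, ee, yy, dif_pos h, dif_pos hx, dif_pos hz, sgen, egen, ygen]
  have rel {x y : FA n} (r : Rel n x y) := RingQuot.mkAlgHom_rel ℂ r
  exact
    { e_mul_s := by simpa using rel (Rel.es i h)
      s_mul_e := by simpa using rel (Rel.se i h)
      s_mul_x_sub_z_mul_s := by simpa using rel (Rel.sy_rel i h hx hz)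
      x_mul_s_sub_s_mul_z := by simpa using rel (Rel.ys_rel i h hx hz)
      e_mul_x_sub_z := by simpa using rel (Rel.e_ydiff i h hx hz)
      x_sub_z_mul_e := by simpa using rel (Rel.ydiff_e i h hx hz)
      commute_x_z := by simpa [commute_iff_eq] using rel (Rel.yy_comm i (i + 1) hx hz) }

theorem disentangling_general (n : ℕ) (i : ℕ) (hi1 : 1 ≤ i) (hi2 : i ≤ n - 1)
    (a b : ℕ) :
    ss n i * yy n (i+1) ^ b * ee n i = -(yy n (i+1) ^ b * ee n i) ∧
    ss n i * yy n i ^ a * ee n i = -(yy n i ^ a * ee n i) ∧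
    ee n i * yy n (i+1) ^ b * ss n i = ee n i * yy n (i+1) ^ b ∧
    ee n i * yy n i ^ a * ss n i = ee n i * yy n i ^ a ∧
    ee n i * yy n i ^ a * yy n (i+1) ^ b * ss n i
      = ∑ k ∈ Finset.range (b+1), (b.choose k) • (ee n i * yy n i ^ (a + k)) ∧
    ss n i * yy n i ^ a * yy n (i+1) ^ b * ee n i
      = -∑ k ∈ Finset.range (a+1), (a.choose k) • (yy n (i+1) ^ (b + k) * ee n i) := by
  have h := localRelations (n := n) ⟨hi1, hi2⟩
  exact ⟨h.s_mul_z_pow_mul_e b, h.s_mul_x_pow_mul_e a, h.e_mul_z_pow_mul_s b, h.e_mul_x_pow_mul_s a,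
    h.e_mul_x_pow_mul_z_pow_mul_s a b, h.s_mul_x_pow_mul_z_pow_mul_e a b⟩

/-- Lemma "disentangling".  In `sVV n` (`n ≥ 2`), for every `1 ≤ i ≤ n-1`
and all natural numbers `a, b`:
(i)   `s_i y_{i+1}^b e_i = - y_{i+1}^b e_i`;
(ii)  `s_i y_i^a e_i = - y_i^a e_i`;
(iii) `e_i y_{i+1}^b s_i = e_i y_{i+1}^b`;
(iv)  `e_i y_i^a s_i = e_i y_i^a`;
(v)   `e_i y_i^a y_{i+1}^b s_i = Σ_{k=0}^{b} (b choose k) e_i y_i^{a+k}`;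
(vi)  `s_i y_i^a y_{i+1}^b e_i = - Σ_{k=0}^{a} (a choose k) y_{i+1}^{b+k} e_i`. -/
theorem disentangling (n : ℕ) (hn : 2 ≤ n) (i : ℕ) (hi1 : 1 ≤ i) (hi2 : i ≤ n - 1)
    (a b : ℕ) :
    ss n i * yy n (i+1) ^ b * ee n i = -(yy n (i+1) ^ b * ee n i) ∧
    ss n i * yy n i ^ a * ee n i = -(yy n i ^ a * ee n i) ∧
    ee n i * yy n (i+1) ^ b * ss n i = ee n i * yy n (i+1) ^ b ∧
    ee n i * yy n i ^ a * ss n i = ee n i * yy n i ^ a ∧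
    ee n i * yy n i ^ a * yy n (i+1) ^ b * ss n i
      = ∑ k ∈ Finset.range (b+1), (b.choose k) • (ee n i * yy n i ^ (a + k)) ∧
    ss n i * yy n i ^ a * yy n (i+1) ^ b * ee n i
      = -∑ k ∈ Finset.range (a+1), (a.choose k) • (yy n (i+1) ^ (b + k) * ee n i) :=
  disentangling_general n i hi1 hi2 a b

end Periplectic
end
end

section
/- For every n ≥ 2 there is a unital ℂ-algebra homomorphism Π_n : sVV_n → sVV_n satisfying Π_n(s_i) = s_i and Π_n(e_i) = e_i for 1 ≤ i ≤ n−1 and Π_n(y_j) = Y_j for 1 ≤ j ≤ n; the image of Π_n equals the periplectic Brauer algebra A_n, and the kernel of Π_n equals the two-sided ideal of sVV_n generated by y_1. -/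
noncomputable section

namespace Periplectic

/-- The Jucys–Murphy elements of the periplectic Brauer algebra, viewed inside `sVV n`:
`Y₁ = 0` and `Y_{j+1} = s_j Y_j s_j + s_j + e_j`. -/
def JM (n : ℕ) : ℕ → sVV n
  | 0 => 0
  | j + 1 => if 1 ≤ j ∧ j ≤ n - 1 then ss n j * JM n j * ss n j + ss n j + ee n j else 0

/-- The periplectic Brauer algebra `A n`, i.e. the unital subalgebra of `sVV n` generated by
`s_1, …, s_{n-1}` and `e_1, …, e_{n-1}`. -/
def An (n : ℕ) : Subalgebra ℂ (sVV n) :=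
  Algebra.adjoin ℂ {a : sVV n |
    (∃ (i : ℕ) (h : 1 ≤ i ∧ i ≤ n - 1), a = sgen n i h) ∨
    (∃ (i : ℕ) (h : 1 ≤ i ∧ i ≤ n - 1), a = egen n i h)}

section Abstract

variable {R : Type*} [Ring R]

/-- Relations satisfied by an adjacent pair `s = s_i`, `t = s_{i+1}`, `e = e_i`, `f = e_{i+1}`. -/
structure PR (s t e f : R) : Prop where
  hss : s * s = 1
  htt : t * t = 1
  hee : e * e = 0
  hff : f * f = 0
  hes : e * s = e
  hse : s * e = -e
  hft : f * t = f
  htf : t * f = -f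
  hbr : s * t * s = t * s * t
  hsfe : s * f * e = t * e
  htef : t * e * f = -(s * f)
  hfet : f * e * t = f * s
  hefs : e * f * s = -(e * t)
  hfef : f * e * f = -f
  hefe : e * f * e = -e

/-- move `a` past `t` inside a right-associated word. -/
theorem swapw {a t : R} (hat : a * t = t * a) (x : R) :
    t * (a * x) = a * (t * x) := by rw [← mul_assoc, ← hat, mul_assoc]

namespace PR

variable {s t e f : R} (h : PR s t e f)
include h

theorem ss' (x : R) : s * (s * x) = x := by rw [← mul_assoc, h.hss, one_mul]
theorem tt' (x : R) : t * (t * x) = x := by rw [← mul_assoc, h.htt, one_mul]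
theorem ee' (x : R) : e * (e * x) = 0 := by rw [← mul_assoc, h.hee, zero_mul]
theorem ff' (x : R) : f * (f * x) = 0 := by rw [← mul_assoc, h.hff, zero_mul]
theorem es' (x : R) : e * (s * x) = e * x := by rw [← mul_assoc, h.hes]
theorem se' (x : R) : s * (e * x) = -(e * x) := by rw [← mul_assoc, h.hse, neg_mul]
theorem ft' (x : R) : f * (t * x) = f * x := by rw [← mul_assoc, h.hft]
theorem tf' (x : R) : t * (f * x) = -(f * x) := by rw [← mul_assoc, h.htf, neg_mul]

theorem br0 : t * (s * t) = s * (t * s) := by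
  rw [← mul_assoc, ← h.hbr, mul_assoc]
theorem br' (x : R) : t * (s * (t * x)) = s * (t * (s * x)) := by
  have h0 := congrArg (· * x) h.br0
  simpa only [mul_assoc] using h0

theorem sfe0 : s * (f * e) = t * e := by rw [← mul_assoc, h.hsfe]
theorem sfe' (x : R) : s * (f * (e * x)) = t * (e * x) := by
  simpa only [mul_assoc] using congrArg (· * x) h.sfe0
theorem tef0 : t * (e * f) = -(s * f) := by rw [← mul_assoc, h.htef]
theorem tef' (x : R) : t * (e * (f * x)) = -(s * (f * x)) := by
  simpa only [mul_assoc, neg_mul] using congrArg (· * x) h.tef0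
theorem fet0 : f * (e * t) = f * s := by rw [← mul_assoc, h.hfet]
theorem fet' (x : R) : f * (e * (t * x)) = f * (s * x) := by
  simpa only [mul_assoc] using congrArg (· * x) h.fet0
theorem efs0 : e * (f * s) = -(e * t) := by rw [← mul_assoc, h.hefs]
theorem efs' (x : R) : e * (f * (s * x)) = -(e * (t * x)) := by
  simpa only [mul_assoc, neg_mul] using congrArg (· * x) h.efs0
theorem fef0 : f * (e * f) = -f := by rw [← mul_assoc, h.hfef]
theorem fef' (x : R) : f * (e * (f * x)) = -(f * x) := by
  simpa only [mul_assoc, neg_mul] using congrArg (· * x) h.fef0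
theorem efe0 : e * (f * e) = -e := by rw [← mul_assoc, h.hefe]
theorem efe' (x : R) : e * (f * (e * x)) = -(e * x) := by
  simpa only [mul_assoc, neg_mul] using congrArg (· * x) h.efe0

theorem ets0 : e * (t * s) = -(e * f) := by
  have h1 : e * t = -(e * (f * s)) := by rw [← mul_assoc, h.hefs, neg_neg]
  rw [← mul_assoc, h1, neg_mul, mul_assoc, mul_assoc, h.hss, mul_one]
theorem ets' (x : R) : e * (t * (s * x)) = -(e * (f * x)) := by
  simpa only [mul_assoc, neg_mul] using congrArg (· * x) h.ets0

theorem ste0 : s * (t * e) = f * e := by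
  rw [← h.sfe0, ss' h]
theorem ste' (x : R) : s * (t * (e * x)) = f * (e * x) := by
  simpa only [mul_assoc] using congrArg (· * x) h.ste0

theorem fst0 : f * (s * t) = f * e := by
  have h1 : f * s = f * (e * t) := h.fet0.symm
  rw [← mul_assoc, h1, mul_assoc, mul_assoc, h.htt, mul_one]
theorem fst' (x : R) : f * (s * (t * x)) = f * (e * x) := by
  simpa only [mul_assoc] using congrArg (· * x) h.fst0

theorem sf0 : s * f = -(t * (e * f)) := by rw [h.tef0, neg_neg]

theorem tsf0 : t * (s * f) = -(e * f) := by
  rw [h.sf0, mul_neg, ← mul_assoc, ← mul_assoc, h.htt, one_mul]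
theorem tsf' (x : R) : t * (s * (f * x)) = -(e * (f * x)) := by
  simpa only [mul_assoc, neg_mul] using congrArg (· * x) h.tsf0

theorem ete0 : e * (t * e) = -e := by
  have h1 : e * t = -(e * (f * s)) := by rw [← mul_assoc, h.hefs, neg_neg]
  rw [← mul_assoc, h1, neg_mul, mul_assoc, mul_assoc, h.hse, mul_neg, mul_neg,
    neg_neg, h.efe0]
theorem ete' (x : R) : e * (t * (e * x)) = -(e * x) := by
  simpa only [mul_assoc, neg_mul] using congrArg (· * x) h.ete0

theorem tet0 : t * (e * t) = s * (f * s) := by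
  have h1 : t * e = s * (f * e) := h.sfe0.symm
  rw [← mul_assoc, h1, mul_assoc, mul_assoc, ← mul_assoc f e t, h.hfet]
theorem tet' (x : R) : t * (e * (t * x)) = s * (f * (s * x)) := by
  simpa only [mul_assoc] using congrArg (· * x) h.tet0

end PR

section Words

variable {s t e f a : R} (h : PR s t e f)
include h

/-- `stsast = tsasts`. -/
theorem wL4 (hat : a * t = t * a) : s * (t * (s * (a * (s * t)))) = t * (s * (a * (s * (t * s)))) := by
  calc s * (t * (s * (a * (s * t))))
      = t * (s * (t * (a * (s * t)))) := (h.br' (a * (s * t))).symm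
    _ = t * (s * (a * (t * (s * t)))) := by rw [swapw hat (s * t)]
    _ = t * (s * (a * (s * (t * s)))) := by rw [h.br0]

theorem wL5 : s * (t * (s * t)) = t * s := by rw [h.br0, h.ss']
theorem wR5 : t * (s * (t * s)) = s * t := by rw [h.br' s, h.hss, mul_one]
theorem wL6 : s * (t * (e * t)) = f * s := by rw [h.ste' t, h.fet0]
theorem wR8 : t * (e * (t * s)) = s * f := by rw [h.tet' s, h.hss, mul_one]
theorem wL7 (haf : a * f = f * a) : e * (t * (s * (a * (s * t)))) = -(e * (a * (f * e))) := by
  rw [h.ets' (a * (s * t)), swapw haf (s * t), h.fst0]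
theorem wR3 (haf : a * f = f * a) : t * (s * (a * (s * (t * e)))) = -(e * (a * (f * e))) := by
  rw [← h.sfe0, h.ss' (f * e), ← swapw haf e, h.tsf' (a * e), swapw haf e]
theorem wL8 : e * (t * (s * t)) = -(e * f) := by rw [h.ets' t, h.hft]
theorem wR6 : t * (s * (t * e)) = -(f * e) := by
  rw [h.br' e, h.hse, mul_neg, mul_neg, h.ste0]
theorem wL9 : e * (t * (e * t)) = -(e * t) := by rw [h.ete' t]
theorem wR9 : t * (e * (t * e)) = -(t * e) := by rw [h.ete0, mul_neg]

theorem wL2 : s * (a * (s * (t * (s * t)))) = s * (a * (t * s)) := by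
  rw [h.br0, h.ss' (t * s)]
theorem wR4 (hat : a * t = t * a) : t * (s * (t * (s * (a * s)))) = s * (a * (t * s)) := by
  rw [h.br' (s * (a * s)), h.ss' (a * s), swapw hat s]
theorem wL3 : s * (a * (s * (t * (e * t)))) = s * (a * (f * s)) := by
  rw [h.tet0, h.ss' (f * s)]
theorem wR7 (haf : a * f = f * a) : t * (e * (t * (s * (a * s)))) = s * (a * (f * s)) := by
  rw [h.tet' (s * (a * s)), h.ss' (a * s), swapw haf s]

theorem key_step (hat : a * t = t * a) (haf : a * f = f * a)
    (hK1 : e * (a * s) = e * a) (hK2 : s * (a * e) = -(a * e)) :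
    f * ((s * a * s + s + e) * t) = f * (s * a * s + s + e) ∧
    t * ((s * a * s + s + e) * f) = -((s * a * s + s + e) * f) := by
  have hK1' : ∀ x : R, e * (a * (s * x)) = e * (a * x) := fun x => by
    simpa only [mul_assoc] using congrArg (· * x) hK1
  have hK2' : ∀ x : R, s * (a * (e * x)) = -(a * (e * x)) := fun x => by
    simpa only [mul_assoc, neg_mul] using congrArg (· * x) hK2
  constructor
  · have K1a : f * (s * (a * (s * t))) = f * (s * (a * s)) := by
      calc f * (s * (a * (s * t)))
          = f * (e * (t * (a * (s * t)))) := (h.fet' (a * (s * t))).symm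
        _ = f * (e * (a * (t * (s * t)))) := by rw [swapw hat (s * t)]
        _ = f * (e * (a * (s * (t * s)))) := by rw [h.br0]
        _ = f * (e * (a * (t * s))) := by rw [hK1' (t * s)]
        _ = f * (e * (t * (a * s))) := by rw [← swapw hat s]
        _ = f * (s * (a * s)) := by rw [h.fet' (a * s)]
    simp only [add_mul, mul_add, mul_assoc]
    rw [K1a, h.fst0, h.fet0]
    abel
  · have K2a : t * (s * (a * (s * f))) = -(s * (a * (s * f))) := by
      calc t * (s * (a * (s * f)))
          = t * (s * (a * (-(t * (e * f))))) := by rw [h.sf0]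
        _ = -(t * (s * (a * (t * (e * f))))) := by simp only [mul_neg]
        _ = -(t * (s * (t * (a * (e * f))))) := by rw [← swapw hat (e * f)]
        _ = -(s * (t * (s * (a * (e * f))))) := by rw [h.br' (a * (e * f))]
        _ = -(s * (t * (-(a * (e * f))))) := by rw [hK2' f]
        _ = s * (t * (a * (e * f))) := by simp only [mul_neg, neg_neg]
        _ = s * (a * (t * (e * f))) := by rw [swapw hat (e * f)]
        _ = s * (a * (-(s * f))) := by rw [h.tef0]
        _ = -(s * (a * (s * f))) := by simp only [mul_neg]
    simp only [add_mul, mul_add, mul_assoc, neg_add_rev]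
    rw [K2a, h.tsf0, h.tef0]
    abel

theorem hard_step (hat : a * t = t * a) (haf : a * f = f * a) :
    s * (t * (s * a * s + s + e) * t + t + f) = (t * (s * a * s + s + e) * t + t + f) * s ∧
    e * (t * (s * a * s + s + e) * t + t + f) = (t * (s * a * s + s + e) * t + t + f) * e := by
  constructor
  · simp only [add_mul, mul_add, mul_assoc]
    rw [wL4 h hat, wL5 h, wL6 h, wR5 h, wR8 h]
    abel
  · simp only [add_mul, mul_add, mul_assoc]
    rw [wL7 h haf, wL8 h, wL9 h, wR3 h haf, wR6 h, wR9 h]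
    abel

theorem yy_step (hat : a * t = t * a) (haf : a * f = f * a)
    (hP : a * (s * (a * s)) + a * s + a * e = s * (a * (s * a)) + s * a + e * a)
    {b : R} (hb : b = s * a * s + s + e) :
    b * (t * (b * t)) + b * t + b * f = t * (b * (t * b)) + t * b + f * b := by
  have hP' : a * (s * (a * s)) = s * (a * (s * a)) + s * a + e * a - a * s - a * e := by
    rw [← hP]; abel
  have V1 : s * (t * (s * (a * (s * (a * (t * s)))))) =
      t * (s * (a * (s * (t * (s * (a * s)))))) := by
    calc s * (t * (s * (a * (s * (a * (t * s))))))
        = s * (t * (s * (a * (s * (t * (a * s)))))) := by rw [← swapw hat s]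
      _ = t * (s * (t * (a * (s * (t * (a * s)))))) := (h.br' _).symm
      _ = t * (s * (a * (t * (s * (t * (a * s)))))) := by
            rw [swapw hat (s * (t * (a * s)))]
      _ = t * (s * (a * (s * (t * (s * (a * s)))))) := by rw [h.br' (a * s)]
  have V2 : s * (t * (s * (a * (t * s)))) = t * (s * (a * s)) := by
    rw [← swapw hat s, ← h.br' (t * (a * s)), h.tt' (a * s)]
  have V3 : s * (t * (e * (a * (t * s)))) = f * (s * (a * s)) := by
    rw [← swapw hat s, h.ste' (t * (a * s)), h.fet' (a * s)]
  have V4 : s * (t * (a * (s * (t * s)))) = s * (a * (s * t)) := by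
    rw [swapw hat (s * (t * s)), h.br' s, h.hss, mul_one]
  have V5 : s * (t * (a * (e * (t * s)))) = s * (a * (s * f)) := by
    rw [swapw hat (e * (t * s)), h.tet' s, h.hss, mul_one]
  have A1 : s * (a * (s * (t * (s * (a * (s * t)))))) =
      s * (t * (a * (s * (a * (s * (t * s)))))) := by
    calc s * (a * (s * (t * (s * (a * (s * t))))))
        = s * (a * (t * (s * (t * (a * (s * t)))))) := by rw [← h.br' (a * (s * t))]
      _ = s * (t * (a * (s * (t * (a * (s * t)))))) := by
            rw [← swapw hat (s * (t * (a * (s * t))))]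
      _ = s * (t * (a * (s * (a * (t * (s * t)))))) := by rw [swapw hat (s * t)]
      _ = s * (t * (a * (s * (a * (s * (t * s)))))) := by rw [h.br0]
  have W1 : s * (a * (s * (t * (s * (a * (s * t)))))) =
      t * (s * (a * (s * (t * (s * (a * s)))))) + t * (s * (a * s)) + f * (s * (a * s))
        - s * (a * (s * t)) - s * (a * (s * f)) := by
    calc s * (a * (s * (t * (s * (a * (s * t))))))
        = s * (t * (a * (s * (a * (s * (t * s)))))) := A1
      _ = s * (t * ((a * (s * (a * s))) * (t * s))) := by simp only [mul_assoc]
      _ = s * (t * ((s * (a * (s * a)) + s * a + e * a - a * s - a * e) * (t * s))) := by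
            rw [hP']
      _ = s * (t * (s * (a * (s * (a * (t * s)))))) + s * (t * (s * (a * (t * s))))
            + s * (t * (e * (a * (t * s)))) - s * (t * (a * (s * (t * s))))
            - s * (t * (a * (e * (t * s)))) := by
            simp only [add_mul, sub_mul, mul_add, mul_sub, mul_assoc]
      _ = t * (s * (a * (s * (t * (s * (a * s)))))) + t * (s * (a * s)) + f * (s * (a * s))
            - s * (a * (s * t)) - s * (a * (s * f)) := by rw [V1, V2, V3, V4, V5]
  subst hb
  simp only [add_mul, mul_add, mul_assoc]
  rw [W1, wL2 h, wL3 h, wL4 h hat, wL5 h, wL6 h, wL7 h haf, wL8 h, wL9 h,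
    wR3 h haf, wR4 h hat, wR5 h, wR6 h, wR7 h haf, wR8 h, wR9 h]
  abel

end Words

end Abstract
section SVVLemmas

variable {n : ℕ}

/-! ### Defining relations, realized in `sVV n`. -/

theorem sgen_sq (i : ℕ) (hi : 1 ≤ i ∧ i ≤ n - 1) :
    sgen n i hi * sgen n i hi = 1 := by
  simpa only [map_mul, map_one, sgen] using RingQuot.mkAlgHom_rel ℂ (Rel.s_sq i hi)

theorem egen_sq (i : ℕ) (hi : 1 ≤ i ∧ i ≤ n - 1) :
    egen n i hi * egen n i hi = 0 := by
  simpa only [map_mul, map_zero, egen] using RingQuot.mkAlgHom_rel ℂ (Rel.e_sq i hi)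

theorem egen_sgen (i : ℕ) (hi : 1 ≤ i ∧ i ≤ n - 1) :
    egen n i hi * sgen n i hi = egen n i hi := by
  simpa only [map_mul, sgen, egen] using RingQuot.mkAlgHom_rel ℂ (Rel.es i hi)

theorem sgen_egen (i : ℕ) (hi : 1 ≤ i ∧ i ≤ n - 1) :
    sgen n i hi * egen n i hi = -(egen n i hi) := by
  simpa only [map_mul, map_neg, sgen, egen] using RingQuot.mkAlgHom_rel ℂ (Rel.se i hi)

theorem sgen_braid (i : ℕ) (hi : 1 ≤ i ∧ i ≤ n - 1) (hi1 : 1 ≤ i + 1 ∧ i + 1 ≤ n - 1) :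
    sgen n i hi * sgen n (i+1) hi1 * sgen n i hi
      = sgen n (i+1) hi1 * sgen n i hi * sgen n (i+1) hi1 := by
  simpa only [map_mul, sgen] using RingQuot.mkAlgHom_rel ℂ (Rel.braid i hi hi1)

theorem egen_eee_up (i : ℕ) (hi : 1 ≤ i ∧ i ≤ n - 1) (hi1 : 1 ≤ i + 1 ∧ i + 1 ≤ n - 1) :
    egen n (i+1) hi1 * egen n i hi * egen n (i+1) hi1 = -(egen n (i+1) hi1) := by
  simpa only [map_mul, map_neg, egen] using RingQuot.mkAlgHom_rel ℂ (Rel.eee_up i hi hi1)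

theorem egen_eee_down (i : ℕ) (hi : 1 ≤ i ∧ i ≤ n - 1) (hi1 : 1 ≤ i + 1 ∧ i + 1 ≤ n - 1) :
    egen n i hi * egen n (i+1) hi1 * egen n i hi = -(egen n i hi) := by
  simpa only [map_mul, map_neg, egen] using RingQuot.mkAlgHom_rel ℂ (Rel.eee_down i hi hi1)

theorem sgen_see (i : ℕ) (hi : 1 ≤ i ∧ i ≤ n - 1) (hi1 : 1 ≤ i + 1 ∧ i + 1 ≤ n - 1) :
    sgen n i hi * egen n (i+1) hi1 * egen n i hi = sgen n (i+1) hi1 * egen n i hi := by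
  simpa only [map_mul, sgen, egen] using RingQuot.mkAlgHom_rel ℂ (Rel.see i hi hi1)

theorem sgen_see' (i : ℕ) (hi : 1 ≤ i ∧ i ≤ n - 1) (hi1 : 1 ≤ i + 1 ∧ i + 1 ≤ n - 1) :
    sgen n (i+1) hi1 * egen n i hi * egen n (i+1) hi1
      = -(sgen n i hi * egen n (i+1) hi1) := by
  simpa only [map_mul, map_neg, sgen, egen] using RingQuot.mkAlgHom_rel ℂ (Rel.see' i hi hi1)

theorem egen_ees (i : ℕ) (hi : 1 ≤ i ∧ i ≤ n - 1) (hi1 : 1 ≤ i + 1 ∧ i + 1 ≤ n - 1) :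
    egen n (i+1) hi1 * egen n i hi * sgen n (i+1) hi1 = egen n (i+1) hi1 * sgen n i hi := by
  simpa only [map_mul, sgen, egen] using RingQuot.mkAlgHom_rel ℂ (Rel.ees i hi hi1)

theorem egen_ees' (i : ℕ) (hi : 1 ≤ i ∧ i ≤ n - 1) (hi1 : 1 ≤ i + 1 ∧ i + 1 ≤ n - 1) :
    egen n i hi * egen n (i+1) hi1 * sgen n i hi
      = -(egen n i hi * sgen n (i+1) hi1) := by
  simpa only [map_mul, map_neg, sgen, egen] using RingQuot.mkAlgHom_rel ℂ (Rel.ees' i hi hi1)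

theorem sgen_sgen_dist (i j : ℕ) (hi : 1 ≤ i ∧ i ≤ n - 1) (hj : 1 ≤ j ∧ j ≤ n - 1)
    (hd : i + 1 < j ∨ j + 1 < i) :
    sgen n i hi * sgen n j hj = sgen n j hj * sgen n i hi := by
  simpa only [map_mul, sgen] using RingQuot.mkAlgHom_rel ℂ (Rel.ss_comm i j hi hj hd)

theorem sgen_egen_dist (i j : ℕ) (hi : 1 ≤ i ∧ i ≤ n - 1) (hj : 1 ≤ j ∧ j ≤ n - 1)
    (hd : i + 1 < j ∨ j + 1 < i) :
    sgen n i hi * egen n j hj = egen n j hj * sgen n i hi := by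
  simpa only [map_mul, sgen, egen] using RingQuot.mkAlgHom_rel ℂ (Rel.se_comm i j hi hj hd)

theorem egen_egen_dist (i j : ℕ) (hi : 1 ≤ i ∧ i ≤ n - 1) (hj : 1 ≤ j ∧ j ≤ n - 1)
    (hd : i + 1 < j ∨ j + 1 < i) :
    egen n i hi * egen n j hj = egen n j hj * egen n i hi := by
  simpa only [map_mul, egen] using RingQuot.mkAlgHom_rel ℂ (Rel.ee_comm i j hi hj hd)

/-! ### Total versions -/

theorem ss_def (i : ℕ) (hi : 1 ≤ i ∧ i ≤ n - 1) : ss n i = sgen n i hi := dif_pos hi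
theorem ee_def (i : ℕ) (hi : 1 ≤ i ∧ i ≤ n - 1) : ee n i = egen n i hi := dif_pos hi

theorem pr_adj (i : ℕ) (h1 : 1 ≤ i) (h2 : i + 1 ≤ n - 1) :
    PR (ss n i) (ss n (i+1)) (ee n i) (ee n (i+1)) := by
  have hi : 1 ≤ i ∧ i ≤ n - 1 := ⟨h1, by omega⟩
  have hi1 : 1 ≤ i + 1 ∧ i + 1 ≤ n - 1 := ⟨by omega, h2⟩
  rw [ss_def i hi, ss_def (i+1) hi1, ee_def i hi, ee_def (i+1) hi1]
  exact
    { hss := sgen_sq i hi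
      htt := sgen_sq (i+1) hi1
      hee := egen_sq i hi
      hff := egen_sq (i+1) hi1
      hes := egen_sgen i hi
      hse := sgen_egen i hi
      hft := egen_sgen (i+1) hi1
      htf := sgen_egen (i+1) hi1
      hbr := sgen_braid i hi hi1
      hsfe := sgen_see i hi hi1
      htef := sgen_see' i hi hi1
      hfet := egen_ees i hi hi1
      hefs := egen_ees' i hi hi1
      hfef := egen_eee_up i hi hi1
      hefe := egen_eee_down i hi hi1 }

theorem JM_zero : JM n 0 = 0 := rfl

theorem JM_succ (j : ℕ) (h1 : 1 ≤ j) (h2 : j ≤ n - 1) :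
    JM n (j+1) = ss n j * JM n j * ss n j + ss n j + ee n j := by
  rw [JM, if_pos ⟨h1, h2⟩]

theorem JM_succ_neg (j : ℕ) (h : ¬(1 ≤ j ∧ j ≤ n - 1)) : JM n (j+1) = 0 := by
  rw [JM, if_neg h]

theorem JM_one : JM n 1 = 0 := by
  have : ¬(1 ≤ 0 ∧ 0 ≤ n - 1) := by omega
  exact JM_succ_neg 0 this

/-! ### Commutation of `s_i`, `e_i` with the Jucys–Murphy elements -/

theorem comm_low : ∀ j i : ℕ, j + 1 ≤ i → i ≤ n - 1 →
    Commute (ss n i) (JM n j) ∧ Commute (ee n i) (JM n j) := by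
  intro j
  induction j with
  | zero =>
    intro i _ _
    rw [JM_zero]
    exact ⟨Commute.zero_right _, Commute.zero_right _⟩
  | succ j IH =>
    intro i hji hin
    by_cases hv : 1 ≤ j ∧ j ≤ n - 1
    · rw [JM_succ j hv.1 hv.2]
      have hi : 1 ≤ i ∧ i ≤ n - 1 := ⟨by omega, hin⟩
      have hd : i + 1 < j ∨ j + 1 < i := Or.inr (by omega)
      have hs : Commute (ss n i) (ss n j) := by
        rw [ss_def i hi, ss_def j hv]; exact sgen_sgen_dist i j hi hv hd
      have hse : Commute (ss n i) (ee n j) := by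
        rw [ss_def i hi, ee_def j hv]; exact sgen_egen_dist i j hi hv hd
      have hes : Commute (ee n i) (ss n j) := by
        rw [ee_def i hi, ss_def j hv]
        exact (sgen_egen_dist j i hv hi (by omega)).symm
      have hee : Commute (ee n i) (ee n j) := by
        rw [ee_def i hi, ee_def j hv]; exact egen_egen_dist i j hi hv hd
      have IHs := IH i (by omega) hin
      exact ⟨(((hs.mul_right IHs.1).mul_right hs).add_right hs).add_right hse,
        (((hes.mul_right IHs.2).mul_right hes).add_right hes).add_right hee⟩
    · rw [JM_succ_neg j hv]
      exact ⟨Commute.zero_right _, Commute.zero_right _⟩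

theorem jm_key : ∀ j : ℕ, 1 ≤ j → j ≤ n - 1 →
    ee n j * (JM n j * ss n j) = ee n j * JM n j ∧
    ss n j * (JM n j * ee n j) = -(JM n j * ee n j) := by
  intro j
  induction j with
  | zero => intro h1 _; omega
  | succ j IH =>
    intro h1 h2
    rcases Nat.eq_zero_or_pos j with rfl | hj
    · have h0 : JM n (0+1) = 0 := JM_one
      rw [h0]
      simp
    · have hjn : j ≤ n - 1 := by omega
      have hat : JM n j * ss n (j+1) = ss n (j+1) * JM n j :=
        ((comm_low j (j+1) le_rfl h2).1.symm).eq
      have haf : JM n j * ee n (j+1) = ee n (j+1) * JM n j :=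
        ((comm_low j (j+1) le_rfl h2).2.symm).eq
      have hK := IH hj hjn
      rw [JM_succ j hj hjn]
      exact key_step (pr_adj j hj h2) hat haf hK.1 hK.2

theorem jm_hard (i : ℕ) (h1 : 1 ≤ i) (h2 : i + 1 ≤ n - 1) :
    ss n i * JM n (i+2) = JM n (i+2) * ss n i ∧
    ee n i * JM n (i+2) = JM n (i+2) * ee n i := by
  have hat : JM n i * ss n (i+1) = ss n (i+1) * JM n i :=
    ((comm_low i (i+1) le_rfl h2).1.symm).eq
  have haf : JM n i * ee n (i+1) = ee n (i+1) * JM n i :=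
    ((comm_low i (i+1) le_rfl h2).2.symm).eq
  have e1 : JM n (i+2) = ss n (i+1) * JM n (i+1) * ss n (i+1) + ss n (i+1) + ee n (i+1) :=
    JM_succ (i+1) (by omega) h2
  have e2 : JM n (i+1) = ss n i * JM n i * ss n i + ss n i + ee n i :=
    JM_succ i h1 (by omega)
  rw [e1, e2]
  exact hard_step (pr_adj i h1 h2) hat haf

theorem comm_high (i : ℕ) (h1 : 1 ≤ i) :
    ∀ j : ℕ, i + 2 ≤ j → j ≤ n →
      Commute (ss n i) (JM n j) ∧ Commute (ee n i) (JM n j) := by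
  intro j hj
  induction j, hj using Nat.le_induction with
  | base =>
    intro hn'
    have := jm_hard (n := n) i h1 (by omega)
    exact ⟨this.1, this.2⟩
  | succ j hij IH =>
    intro hjn
    have hv : 1 ≤ j ∧ j ≤ n - 1 := ⟨by omega, by omega⟩
    rw [JM_succ j hv.1 hv.2]
    have hij' : i + 1 < j := by omega
    have hi : 1 ≤ i ∧ i ≤ n - 1 := ⟨h1, by omega⟩
    have hd : i + 1 < j ∨ j + 1 < i := Or.inl hij'
    have hs : Commute (ss n i) (ss n j) := by
      rw [ss_def i hi, ss_def j hv]; exact sgen_sgen_dist i j hi hv hd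
    have hse : Commute (ss n i) (ee n j) := by
      rw [ss_def i hi, ee_def j hv]; exact sgen_egen_dist i j hi hv hd
    have hes : Commute (ee n i) (ss n j) := by
      rw [ee_def i hi, ss_def j hv]
      exact (sgen_egen_dist j i hv hi (by omega)).symm
    have hee : Commute (ee n i) (ee n j) := by
      rw [ee_def i hi, ee_def j hv]; exact egen_egen_dist i j hi hv hd
    have IHs := IH (by omega)
    exact ⟨(((hs.mul_right IHs.1).mul_right hs).add_right hs).add_right hse,
      (((hes.mul_right IHs.2).mul_right hes).add_right hes).add_right hee⟩

theorem comm_all (i j : ℕ) (h1 : 1 ≤ i) (h2 : i ≤ n - 1) (hne1 : j ≠ i)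
    (hne2 : j ≠ i + 1) (hjn : j ≤ n) :
    Commute (ss n i) (JM n j) ∧ Commute (ee n i) (JM n j) := by
  rcases lt_or_ge j i with hlt | hge
  · exact comm_low j i (by omega) h2
  · have : i + 2 ≤ j := by omega
    exact comm_high i h1 j this hjn

/-! ### Commutativity of the Jucys–Murphy elements -/

theorem jm_P : ∀ j : ℕ, 1 ≤ j → j ≤ n - 1 →
    JM n j * (ss n j * (JM n j * ss n j)) + JM n j * ss n j + JM n j * ee n j =
    ss n j * (JM n j * (ss n j * JM n j)) + ss n j * JM n j + ee n j * JM n j := by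
  intro j
  induction j with
  | zero => intro h1 _; omega
  | succ j IH =>
    intro h1 h2
    rcases Nat.eq_zero_or_pos j with rfl | hj
    · have h0 : JM n (0+1) = 0 := JM_one
      rw [h0]
      simp
    · have hat : JM n j * ss n (j+1) = ss n (j+1) * JM n j :=
        ((comm_low j (j+1) le_rfl h2).1.symm).eq
      have haf : JM n j * ee n (j+1) = ee n (j+1) * JM n j :=
        ((comm_low j (j+1) le_rfl h2).2.symm).eq
      exact yy_step (pr_adj j hj h2) hat haf (IH hj (by omega)) (JM_succ j hj (by omega))

theorem jm_adj (j : ℕ) (h1 : 1 ≤ j) (h2 : j ≤ n - 1) :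
    Commute (JM n j) (JM n (j+1)) := by
  have hP := jm_P j h1 h2
  show JM n j * JM n (j+1) = JM n (j+1) * JM n j
  rw [JM_succ j h1 h2]
  simp only [mul_add, add_mul, mul_assoc]
  exact hP

theorem jm_comm_le : ∀ k j : ℕ, j ≤ k → Commute (JM n j) (JM n k) := by
  intro k
  induction k with
  | zero =>
    intro j hj
    obtain rfl := Nat.le_zero.mp hj
    exact Commute.refl _
  | succ k IH =>
    intro j hj
    rcases eq_or_lt_of_le hj with rfl | hjk
    · exact Commute.refl _
    · have hjk' : j ≤ k := by omega
      by_cases hv : 1 ≤ k ∧ k ≤ n - 1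
      · rcases eq_or_lt_of_le hjk' with rfl | hlt
        · exact jm_adj j hv.1 hv.2
        · rw [JM_succ k hv.1 hv.2]
          have hsc : Commute (JM n j) (ss n k) :=
            (comm_low j k (by omega) hv.2).1.symm
          have hec : Commute (JM n j) (ee n k) :=
            (comm_low j k (by omega) hv.2).2.symm
          exact (((hsc.mul_right (IH j hjk')).mul_right hsc).add_right hsc).add_right hec
      · rw [JM_succ_neg k hv]
        exact Commute.zero_right _

theorem jm_comm (j k : ℕ) : Commute (JM n j) (JM n k) := by
  rcases le_total j k with h | h
  · exact jm_comm_le k j h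
  · exact (jm_comm_le j k h).symm

end SVVLemmas
section Projection

variable {n : ℕ}

/-- The map on generators defining the projection `Πₙ`. -/
def genMap (n : ℕ) : Gen n → sVV n
  | .S i h => sgen n i h
  | .E i h => egen n i h
  | .Y j _ => JM n j

/-- The lift of `genMap` to the free algebra. -/
def bigF (n : ℕ) : FA n →ₐ[ℂ] sVV n := FreeAlgebra.lift ℂ (genMap n)

theorem bigF_fS (i : ℕ) (h : 1 ≤ i ∧ i ≤ n - 1) : bigF n (fS n i h) = sgen n i h := by
  simp [bigF, fS, genMap]

theorem bigF_fE (i : ℕ) (h : 1 ≤ i ∧ i ≤ n - 1) : bigF n (fE n i h) = egen n i h := by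
  simp [bigF, fE, genMap]

theorem bigF_fY (j : ℕ) (h : 1 ≤ j ∧ j ≤ n) : bigF n (fY n j h) = JM n j := by
  simp [bigF, fY, genMap]

theorem bigF_rel : ∀ ⦃x y : FA n⦄, Rel n x y → bigF n x = bigF n y := by
  intro x y r
  cases r with
  | s_sq i h =>
    simp only [map_mul, map_one, bigF_fS]; exact sgen_sq i h
  | se_comm i j hi hj hij =>
    simp only [map_mul, bigF_fS, bigF_fE]; exact sgen_egen_dist i j hi hj hij
  | ee_comm i j hi hj hij =>
    simp only [map_mul, bigF_fE]; exact egen_egen_dist i j hi hj hij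
  | ey_comm i j hi hj hij =>
    simp only [map_mul, bigF_fE, bigF_fY]
    have h0 := (comm_all i j hi.1 hi.2 hij.1 hij.2 hj.2).2.eq
    rwa [ee_def i hi] at h0
  | yy_comm i j hi hj =>
    simp only [map_mul, bigF_fY]; exact (jm_comm i j).eq
  | ss_comm i j hi hj hij =>
    simp only [map_mul, bigF_fS]; exact sgen_sgen_dist i j hi hj hij
  | braid i hi hi1 =>
    simp only [map_mul, bigF_fS]; exact sgen_braid i hi hi1
  | sy_comm i j hi hj hij =>
    simp only [map_mul, bigF_fS, bigF_fY]
    have h0 := (comm_all i j hi.1 hi.2 hij.1 hij.2 hj.2).1.eq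
    rwa [ss_def i hi] at h0
  | eee_up i hi hi1 =>
    simp only [map_mul, map_neg, bigF_fE]; exact egen_eee_up i hi hi1
  | eee_down i hi hi1 =>
    simp only [map_mul, map_neg, bigF_fE]; exact egen_eee_down i hi hi1
  | es i hi =>
    simp only [map_mul, bigF_fS, bigF_fE]; exact egen_sgen i hi
  | se i hi =>
    simp only [map_mul, map_neg, bigF_fS, bigF_fE]; exact sgen_egen i hi
  | see i hi hi1 =>
    simp only [map_mul, bigF_fS, bigF_fE]; exact sgen_see i hi hi1
  | see' i hi hi1 =>
    simp only [map_mul, map_neg, bigF_fS, bigF_fE]; exact sgen_see' i hi hi1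
  | ees i hi hi1 =>
    simp only [map_mul, bigF_fS, bigF_fE]; exact egen_ees i hi hi1
  | ees' i hi hi1 =>
    simp only [map_mul, map_neg, bigF_fS, bigF_fE]; exact egen_ees' i hi hi1
  | e_sq i hi =>
    simp only [map_mul, map_zero, bigF_fE]; exact egen_sq i hi
  | sy_rel i hi hyi hyi1 =>
    simp only [map_mul, map_sub, map_one, map_neg, bigF_fS, bigF_fE, bigF_fY]
    rw [← ss_def i hi, ← ee_def i hi, JM_succ i hi.1 hi.2]
    have hss : ss n i * ss n i = 1 := by rw [ss_def i hi]; exact sgen_sq i hi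
    have hes : ee n i * ss n i = ee n i := by
      rw [ss_def i hi, ee_def i hi]; exact egen_sgen i hi
    simp only [add_mul, mul_assoc, hss, mul_one, hes]
    abel
  | ys_rel i hi hyi hyi1 =>
    simp only [map_mul, map_sub, map_one, bigF_fS, bigF_fE, bigF_fY]
    rw [← ss_def i hi, ← ee_def i hi, JM_succ i hi.1 hi.2]
    have hss : ss n i * ss n i = 1 := by rw [ss_def i hi]; exact sgen_sq i hi
    have hse : ss n i * ee n i = -(ee n i) := by
      rw [ss_def i hi, ee_def i hi]; exact sgen_egen i hi
    have h1 : ∀ x : sVV n, ss n i * (ss n i * x) = x := fun x => by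
      rw [← mul_assoc, hss, one_mul]
    simp only [mul_add, mul_assoc, h1, hss, hse]
    abel
  | e_ydiff i hi hyi hyi1 =>
    simp only [map_mul, map_sub, map_neg, bigF_fE, bigF_fY]
    rw [← ee_def i hi, JM_succ i hi.1 hi.2]
    have hK := jm_key i hi.1 hi.2
    have hes : ee n i * ss n i = ee n i := by
      rw [ss_def i hi, ee_def i hi]; exact egen_sgen i hi
    have heef : ee n i * ee n i = 0 := by rw [ee_def i hi]; exact egen_sq i hi
    have he1 : ∀ x : sVV n, ee n i * (ss n i * x) = ee n i * x := fun x => by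
      rw [← mul_assoc, hes]
    simp only [mul_sub, mul_add, mul_assoc, he1, hK.1, hes, heef]
    abel
  | ydiff_e i hi hyi hyi1 =>
    simp only [map_mul, map_sub, bigF_fE, bigF_fY]
    rw [← ee_def i hi, JM_succ i hi.1 hi.2]
    have hK := jm_key i hi.1 hi.2
    have hse : ss n i * ee n i = -(ee n i) := by
      rw [ss_def i hi, ee_def i hi]; exact sgen_egen i hi
    have heef : ee n i * ee n i = 0 := by rw [ee_def i hi]; exact egen_sq i hi
    have hx : (ss n i * JM n i * ss n i + ss n i + ee n i) * ee n i
        = JM n i * ee n i + -(ee n i) + 0 := by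
      have hmn : ∀ x y : sVV n, x * -y = -(x * y) := fun x y => mul_neg x y
      rw [add_mul, add_mul, heef, hse, mul_assoc, mul_assoc, hse, hmn, hmn, hK.2, neg_neg]
    rw [sub_mul, hx]
    abel

/-- The projection `Πₙ : sVV n → sVV n`. -/
def Pn (n : ℕ) : sVV n →ₐ[ℂ] sVV n :=
  RingQuot.liftAlgHom ℂ ⟨bigF n, bigF_rel⟩

theorem Pn_mk (x : FA n) : Pn n (RingQuot.mkAlgHom ℂ (Rel n) x) = bigF n x :=
  RingQuot.liftAlgHom_mkAlgHom_apply _ _ _ _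

theorem Pn_sgen (i : ℕ) (h : 1 ≤ i ∧ i ≤ n - 1) : Pn n (sgen n i h) = sgen n i h := by
  show Pn n (RingQuot.mkAlgHom ℂ (Rel n) (fS n i h)) = sgen n i h
  rw [Pn_mk, bigF_fS]

theorem Pn_egen (i : ℕ) (h : 1 ≤ i ∧ i ≤ n - 1) : Pn n (egen n i h) = egen n i h := by
  show Pn n (RingQuot.mkAlgHom ℂ (Rel n) (fE n i h)) = egen n i h
  rw [Pn_mk, bigF_fE]

theorem Pn_ygen (j : ℕ) (h : 1 ≤ j ∧ j ≤ n) : Pn n (ygen n j h) = JM n j := by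
  show Pn n (RingQuot.mkAlgHom ℂ (Rel n) (fY n j h)) = JM n j
  rw [Pn_mk, bigF_fY]

theorem JM_mem_An : ∀ j : ℕ, JM n j ∈ An n := by
  intro j
  induction j with
  | zero => rw [JM_zero]; exact zero_mem _
  | succ j IH =>
    by_cases hv : 1 ≤ j ∧ j ≤ n - 1
    · rw [JM_succ j hv.1 hv.2]
      have hs : ss n j ∈ An n := by
        rw [ss_def j hv]
        exact Algebra.subset_adjoin (Or.inl ⟨j, hv, rfl⟩)
      have he : ee n j ∈ An n := by
        rw [ee_def j hv]
        exact Algebra.subset_adjoin (Or.inr ⟨j, hv, rfl⟩)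
      exact add_mem (add_mem (mul_mem (mul_mem hs IH) hs) hs) he
    · rw [JM_succ_neg j hv]; exact zero_mem _

theorem bigF_mem_An (z : FA n) : bigF n z ∈ An n := by
  induction z using FreeAlgebra.induction with
  | grade0 r => rw [AlgHom.commutes]; exact Subalgebra.algebraMap_mem _ r
  | grade1 g =>
    cases g with
    | S i h =>
      rw [show FreeAlgebra.ι ℂ (Gen.S i h) = fS n i h from rfl, bigF_fS]
      exact Algebra.subset_adjoin (Or.inl ⟨i, h, rfl⟩)
    | E i h =>
      rw [show FreeAlgebra.ι ℂ (Gen.E i h) = fE n i h from rfl, bigF_fE]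
      exact Algebra.subset_adjoin (Or.inr ⟨i, h, rfl⟩)
    | Y j h =>
      rw [show FreeAlgebra.ι ℂ (Gen.Y j h) = fY n j h from rfl, bigF_fY]
      exact JM_mem_An j
  | mul a b ha hb => rw [map_mul]; exact mul_mem ha hb
  | add a b ha hb => rw [map_add]; exact add_mem ha hb

theorem Pn_range : (Pn n).range = An n := by
  apply le_antisymm
  · intro x hx
    rw [AlgHom.mem_range] at hx
    obtain ⟨y, rfl⟩ := hx
    obtain ⟨z, rfl⟩ := RingQuot.mkAlgHom_surjective ℂ (Rel n) y
    rw [Pn_mk]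
    exact bigF_mem_An z
  · rw [An]
    apply Algebra.adjoin_le
    rintro x (⟨i, h, rfl⟩ | ⟨i, h, rfl⟩)
    · exact ⟨sgen n i h, Pn_sgen i h⟩
    · exact ⟨egen n i h, Pn_egen i h⟩

/-- The recursion for `ygen` inside `sVV n`. -/
theorem ygen_rec (j : ℕ) (h : 1 ≤ j + 1 ∧ j + 1 ≤ n) (hj : 1 ≤ j)
    (hv : 1 ≤ j ∧ j ≤ n - 1) (hv' : 1 ≤ j ∧ j ≤ n) :
    ygen n (j+1) h = sgen n j hv * ygen n j hv' * sgen n j hv + sgen n j hv + egen n j hv := by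
  have h0 : sgen n j hv * ygen n j hv' - ygen n (j+1) h * sgen n j hv
      = -(egen n j hv) - 1 := by
    simpa only [map_mul, map_sub, map_neg, map_one, sgen, egen, ygen] using
      RingQuot.mkAlgHom_rel ℂ (Rel.sy_rel j hv hv' h)
  have h1 : ygen n (j+1) h * sgen n j hv
      = sgen n j hv * ygen n j hv' + egen n j hv + 1 := by
    rw [← sub_eq_zero]
    have h2 : ygen n (j+1) h * sgen n j hv
        - (sgen n j hv * ygen n j hv' + egen n j hv + 1)
        = -((sgen n j hv * ygen n j hv' - ygen n (j+1) h * sgen n j hv)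
            - (-(egen n j hv) - 1)) := by abel
    rw [h2, sub_eq_zero_of_eq h0, neg_zero]
  have h3 : ygen n (j+1) h
      = (sgen n j hv * ygen n j hv' + egen n j hv + 1) * sgen n j hv := by
    rw [← h1, mul_assoc, sgen_sq j hv, mul_one]
  rw [h3, add_mul, add_mul, one_mul, egen_sgen j hv]
  abel

end Projection
section Kernel

variable {n : ℕ}

theorem ygen_sub_JM_mem (hn : 2 ≤ n) :
    ∀ j : ℕ, ∀ h : 1 ≤ j ∧ j ≤ n,
      ygen n j h - JM n j ∈ TwoSidedIdeal.span {yy n 1} := by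
  intro j
  induction j with
  | zero => intro h; omega
  | succ j IH =>
    intro h
    rcases Nat.eq_zero_or_pos j with rfl | hj
    · have h1 : JM n (0+1) = 0 := JM_one
      rw [h1, sub_zero]
      have h2 : yy n 1 = ygen n (0+1) h := dif_pos h
      rw [← h2]
      exact TwoSidedIdeal.subset_span rfl
    · have hv : 1 ≤ j ∧ j ≤ n - 1 := ⟨hj, by omega⟩
      have hv' : 1 ≤ j ∧ j ≤ n := ⟨hj, by omega⟩
      have hrec := ygen_rec j h hj hv hv'
      have hJ := JM_succ j hv.1 hv.2
      have key : ygen n (j+1) h - JM n (j+1)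
          = sgen n j hv * (ygen n j hv' - JM n j) * sgen n j hv := by
        rw [hrec, hJ, ss_def j hv, ee_def j hv, mul_sub, sub_mul]
        abel
      rw [key]
      exact TwoSidedIdeal.mul_mem_right _ _ _
        (TwoSidedIdeal.mul_mem_left _ _ _ (IH hv'))

theorem sub_Pn_mem (hn : 2 ≤ n) (x : sVV n) :
    x - Pn n x ∈ TwoSidedIdeal.span {yy n 1} := by
  obtain ⟨z, rfl⟩ := RingQuot.mkAlgHom_surjective ℂ (Rel n) x
  induction z using FreeAlgebra.induction with
  | grade0 r =>
    rw [AlgHom.commutes, AlgHom.commutes]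
    rw [sub_self]
    exact zero_mem _
  | grade1 g =>
    cases g with
    | S i h =>
      have : RingQuot.mkAlgHom ℂ (Rel n) (FreeAlgebra.ι ℂ (Gen.S i h)) = sgen n i h := rfl
      rw [this, Pn_sgen, sub_self]
      exact zero_mem _
    | E i h =>
      have : RingQuot.mkAlgHom ℂ (Rel n) (FreeAlgebra.ι ℂ (Gen.E i h)) = egen n i h := rfl
      rw [this, Pn_egen, sub_self]
      exact zero_mem _
    | Y j h =>
      have : RingQuot.mkAlgHom ℂ (Rel n) (FreeAlgebra.ι ℂ (Gen.Y j h)) = ygen n j h := rfl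
      rw [this, Pn_ygen]
      exact ygen_sub_JM_mem hn j h
  | mul a b ha hb =>
    rw [map_mul, map_mul]
    have key : RingQuot.mkAlgHom ℂ (Rel n) a * RingQuot.mkAlgHom ℂ (Rel n) b
        - Pn n (RingQuot.mkAlgHom ℂ (Rel n) a) * Pn n (RingQuot.mkAlgHom ℂ (Rel n) b)
        = RingQuot.mkAlgHom ℂ (Rel n) a *
            (RingQuot.mkAlgHom ℂ (Rel n) b - Pn n (RingQuot.mkAlgHom ℂ (Rel n) b))
          + (RingQuot.mkAlgHom ℂ (Rel n) a - Pn n (RingQuot.mkAlgHom ℂ (Rel n) a)) *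
            Pn n (RingQuot.mkAlgHom ℂ (Rel n) b) := by
      rw [mul_sub, sub_mul]; abel
    rw [key]
    exact add_mem (TwoSidedIdeal.mul_mem_left _ _ _ hb)
      (TwoSidedIdeal.mul_mem_right _ _ _ ha)
  | add a b ha hb =>
    rw [map_add, map_add]
    have key : RingQuot.mkAlgHom ℂ (Rel n) a + RingQuot.mkAlgHom ℂ (Rel n) b
        - (Pn n (RingQuot.mkAlgHom ℂ (Rel n) a) + Pn n (RingQuot.mkAlgHom ℂ (Rel n) b))
        = (RingQuot.mkAlgHom ℂ (Rel n) a - Pn n (RingQuot.mkAlgHom ℂ (Rel n) a))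
          + (RingQuot.mkAlgHom ℂ (Rel n) b - Pn n (RingQuot.mkAlgHom ℂ (Rel n) b)) := by
      abel
    rw [key]
    exact add_mem ha hb

theorem Pn_yy_one (hn : 2 ≤ n) : Pn n (yy n 1) = 0 := by
  have h : 1 ≤ 1 ∧ 1 ≤ n := ⟨le_rfl, by omega⟩
  rw [show yy n 1 = ygen n 1 h from dif_pos h, Pn_ygen, JM_one]

theorem Pn_ker_iff (hn : 2 ≤ n) (x : sVV n) :
    Pn n x = 0 ↔ x ∈ TwoSidedIdeal.span {yy n 1} := by
  constructor
  · intro hx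
    have h0 := sub_Pn_mem hn x
    rwa [hx, sub_zero] at h0
  · intro hx
    have h1 : ({yy n 1} : Set (sVV n)) ⊆ (TwoSidedIdeal.ker (Pn n) : Set (sVV n)) := by
      intro z hz
      rw [Set.mem_singleton_iff] at hz
      subst hz
      rw [SetLike.mem_coe, TwoSidedIdeal.mem_ker]
      exact Pn_yy_one hn
    have h2 := TwoSidedIdeal.mem_span_iff.mp hx (TwoSidedIdeal.ker (Pn n)) h1
    rwa [TwoSidedIdeal.mem_ker] at h2

end Kernel
/-- For every `n ≥ 2` there is a unital `ℂ`-algebra homomorphism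
`Πₙ : sVV_n → sVV_n` with `Πₙ(s_i) = s_i`, `Πₙ(e_i) = e_i`, `Πₙ(y_j) = Y_j` (the Jucys–Murphy
element); its image is the periplectic Brauer algebra `A_n` and its kernel is the two-sided
ideal generated by `y_1`. -/
theorem exists_projection_to_An (n : ℕ) (hn : 2 ≤ n) :
    ∃ Pn : sVV n →ₐ[ℂ] sVV n,
      (∀ (i : ℕ) (h : 1 ≤ i ∧ i ≤ n - 1), Pn (sgen n i h) = sgen n i h) ∧
      (∀ (i : ℕ) (h : 1 ≤ i ∧ i ≤ n - 1), Pn (egen n i h) = egen n i h) ∧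
      (∀ (j : ℕ) (h : 1 ≤ j ∧ j ≤ n), Pn (ygen n j h) = JM n j) ∧
      Pn.range = An n ∧
      (∀ x : sVV n, Pn x = 0 ↔ x ∈ TwoSidedIdeal.span {yy n 1}) := by
  exact ⟨Pn n, fun i h => Pn_sgen i h, fun i h => Pn_egen i h, fun j h => Pn_ygen j h,
    Pn_range, fun x => Pn_ker_iff hn x⟩

end Periplectic
end
end

section
/- Let n ≥ 2, d ≥ 1 and let ρ : sVV_n → Mat_d(ℂ) be a calibrated representation. Suppose the representation is indecomposable, i.e. there is no direct sum decomposition ℂ^d = U ⊕ W with U and W nonzero subspaces each invariant under ρ(a) for all a ∈ sVV_n, and suppose ρ(e_i) ≠ 0 for some 1 ≤ i ≤ n−1. Then ρ(Θ̃) = 0, where Θ̃ = ∏_{1 ≤ i < j ≤ n} (1 − (y_i − y_j)^2) ∈ sVV_n. -/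
noncomputable section

namespace Periplectic

/-- A calibrated representation of `sVV n` of dimension `d`: a unital `ℂ`-algebra homomorphism
to `d × d` matrices under which every `y_j` acts by a diagonal matrix. -/
def IsCalibrated {n d : ℕ} (ρ : sVV n →ₐ[ℂ] Matrix (Fin d) (Fin d) ℂ) : Prop :=
  ∀ j : ℕ, 1 ≤ j → j ≤ n → (ρ (yy n j)).IsDiag

/-- Indecomposability of a matrix representation of `sVV n`: there is no direct sum
decomposition `ℂ^d = U ⊕ W` with `U, W` nonzero subspaces invariant under all `ρ a`. -/
def IsIndecomposableRep {n d : ℕ} (ρ : sVV n →ₐ[ℂ] Matrix (Fin d) (Fin d) ℂ) : Prop :=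
  ¬ ∃ U W : Submodule ℂ (Fin d → ℂ), U ≠ ⊥ ∧ W ≠ ⊥ ∧ IsCompl U W ∧
      (∀ a : sVV n, ∀ x ∈ U, (ρ a).mulVec x ∈ U) ∧
      (∀ a : sVV n, ∀ x ∈ W, (ρ a).mulVec x ∈ W)

/-- The central element `Θ̃ = ∏_{1 ≤ i < j ≤ n} (1 - (y_i - y_j)²)` of `sVV n`. -/
def thetaTilde (n : ℕ) : sVV n :=
  ((List.range n).map (fun a =>
    (((List.range n).filter fun b => decide (a < b)).map
      fun b => (1 : sVV n) - (yy n (a+1) - yy n (b+1)) ^ 2).prod)).prod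

/-! On a calibrated representation the standard basis vectors are simultaneous eigenvectors of
the `y_j`, and `ρ(Θ̃)` is the diagonal matrix whose `t`-th entry is `Θ` evaluated at the weight
of the `t`-th basis vector. The relations (VV7), (VV8) and `s_i y_j = y_j s_i` show that a
nonzero entry of `ρ(e_i)` forces a weight difference `y_i - y_{i+1} = ±1`, which kills a factor
of `Θ`, and that a nonzero off-diagonal entry of `ρ(s_i)` at which `ρ(e_i)` vanishes swaps two
coordinates of the weight, which leaves the symmetric polynomial `Θ` unchanged. Hence `ρ(Θ̃)`
commutes with the whole image of `ρ`, so the spectral idempotents of `ρ(Θ̃)` are trivial by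
indecomposability: `ρ(Θ̃)` is a scalar, and that scalar vanishes at the weight of a basis vector
on which some `ρ(e_i)` is nonzero. -/

end Periplectic

open Finset Matrix

theorem Finset.prod_range_comp_add_one {M : Type*} [CommMonoid M] (n : ℕ) (g : ℕ → M) :
    ∏ a ∈ range n, g (a + 1) = ∏ a ∈ Icc 1 n, g a := by
  rw [range_eq_Ico, prod_Ico_add', zero_add, Ico_add_one_right_eq_Icc]

theorem Finset.prod_prod_eq_prod_prod_lt {ι M : Type*} [LinearOrder ι] [CommMonoid M]
    (s : Finset ι) (f : ι → ι → M) (hf : ∀ a, f a a = 1) :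
    ∏ a ∈ s, ∏ b ∈ s, f a b = ∏ a ∈ s, ∏ b ∈ s with a < b, f a b * f b a := by
  have hle (a : ι) : ∏ b ∈ s with ¬ a < b, f a b = ∏ b ∈ s with b < a, f a b := by
    refine (prod_subset (fun b hb => ?_) fun b hb hb' => ?_).symm
    · simp only [mem_filter, not_lt] at hb ⊢
      exact ⟨hb.1, hb.2.le⟩
    · simp only [mem_filter, not_and, not_lt] at hb hb'
      rw [le_antisymm hb.2 (hb' hb.1), hf]
  have hgt : ∏ a ∈ s, ∏ b ∈ s with ¬ a < b, f a b = ∏ a ∈ s, ∏ b ∈ s with a < b, f b a := by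
    simp only [hle]
    exact prod_comm' (by simp; tauto)
  simp only [prod_mul_distrib]
  rw [← hgt, ← prod_mul_distrib]
  exact prod_congr rfl fun a _ => (prod_filter_mul_prod_filter_not _ _ _).symm

section DiagonalCommute

variable {ι R : Type*} [Fintype ι] [DecidableEq ι] [CommRing R] [NoZeroDivisors R]

theorem Matrix.commute_diagonal_iff {θ : ι → R} {M : Matrix ι ι R} :
    Commute (diagonal θ) M ↔ ∀ t u, M t u ≠ 0 → θ t = θ u := by
  simp only [Commute, SemiconjBy, ← Matrix.ext_iff, diagonal_mul, mul_diagonal]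
  refine forall₂_congr fun t u => ?_
  rw [mul_comm, mul_eq_mul_left_iff, or_iff_not_imp_right]

theorem Commute.diagonal_comp {θ : ι → R} {M : Matrix ι ι R} (h : Commute (diagonal θ) M)
    (g : R → R) : Commute (diagonal (g ∘ θ)) M := by
  rw [commute_diagonal_iff] at h ⊢
  exact fun t u htu => congrArg g (h t u htu)

end DiagonalCommute

theorem RingQuot.range_le_of_forall_ι_mem {R X A : Type*} [CommSemiring R] [Semiring A]
    [Algebra R A] {r : FreeAlgebra R X → FreeAlgebra R X → Prop} (f : RingQuot r →ₐ[R] A)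
    {S : Subalgebra R A} (h : ∀ x, f (mkAlgHom R r (FreeAlgebra.ι R x)) ∈ S) : f.range ≤ S := by
  rintro _ ⟨a, rfl⟩
  obtain ⟨z, rfl⟩ := mkAlgHom_surjective R r a
  have : Algebra.adjoin R (Set.range (FreeAlgebra.ι R)) ≤ S.comap (f.comp (mkAlgHom R r)) :=
    Algebra.adjoin_le (by rintro _ ⟨x, rfl⟩; exact h x)
  rw [FreeAlgebra.adjoin_range_ι] at this
  exact this Algebra.mem_top

namespace Periplectic

section Relations

variable {n i : ℕ}

theorem yy_eq_ygen {j : ℕ} (hj : 1 ≤ j ∧ j ≤ n) : yy n j = ygen n j hj := dif_pos hj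

theorem egen_mul_yy_sub_yy (hi : 1 ≤ i ∧ i ≤ n - 1) :
    egen n i hi * (yy n i - yy n (i + 1)) = -egen n i hi := by
  have hyi : 1 ≤ i ∧ i ≤ n := ⟨hi.1, by omega⟩
  have hyi1 : 1 ≤ i + 1 ∧ i + 1 ≤ n := ⟨by omega, by omega⟩
  simpa [yy_eq_ygen hyi, yy_eq_ygen hyi1, egen, ygen] using
    RingQuot.mkAlgHom_rel ℂ (Rel.e_ydiff i hi hyi hyi1)

theorem yy_sub_yy_mul_egen (hi : 1 ≤ i ∧ i ≤ n - 1) :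
    (yy n i - yy n (i + 1)) * egen n i hi = egen n i hi := by
  have hyi : 1 ≤ i ∧ i ≤ n := ⟨hi.1, by omega⟩
  have hyi1 : 1 ≤ i + 1 ∧ i + 1 ≤ n := ⟨by omega, by omega⟩
  simpa [yy_eq_ygen hyi, yy_eq_ygen hyi1, egen, ygen] using
    RingQuot.mkAlgHom_rel ℂ (Rel.ydiff_e i hi hyi hyi1)

theorem sgen_mul_yy_sub_yy_mul_sgen (hi : 1 ≤ i ∧ i ≤ n - 1) :
    sgen n i hi * yy n i - yy n (i + 1) * sgen n i hi = -egen n i hi - 1 := by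
  have hyi : 1 ≤ i ∧ i ≤ n := ⟨hi.1, by omega⟩
  have hyi1 : 1 ≤ i + 1 ∧ i + 1 ≤ n := ⟨by omega, by omega⟩
  simpa [yy_eq_ygen hyi, yy_eq_ygen hyi1, sgen, egen, ygen] using
    RingQuot.mkAlgHom_rel ℂ (Rel.sy_rel i hi hyi hyi1)

theorem yy_mul_sgen_sub_sgen_mul_yy (hi : 1 ≤ i ∧ i ≤ n - 1) :
    yy n i * sgen n i hi - sgen n i hi * yy n (i + 1) = egen n i hi - 1 := by
  have hyi : 1 ≤ i ∧ i ≤ n := ⟨hi.1, by omega⟩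
  have hyi1 : 1 ≤ i + 1 ∧ i + 1 ≤ n := ⟨by omega, by omega⟩
  simpa [yy_eq_ygen hyi, yy_eq_ygen hyi1, sgen, egen, ygen] using
    RingQuot.mkAlgHom_rel ℂ (Rel.ys_rel i hi hyi hyi1)

theorem sgen_mul_yy_comm (hi : 1 ≤ i ∧ i ≤ n - 1) {j : ℕ} (hj : 1 ≤ j ∧ j ≤ n)
    (hji : j ≠ i ∧ j ≠ i + 1) : sgen n i hi * yy n j = yy n j * sgen n i hi := by
  simpa [yy_eq_ygen hj, sgen, ygen] using RingQuot.mkAlgHom_rel ℂ (Rel.sy_comm i j hi hj hji)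

end Relations

section ThetaPoly

variable {R : Type*}

/-- `thetaTilde` with the `y_j` replaced by arbitrary `x_j`, as the same list expression so that
`thetaTilde_eq_thetaPoly` is `rfl`. -/
def thetaPoly [Ring R] (n : ℕ) (x : ℕ → R) : R :=
  ((List.range n).map (fun a =>
    (((List.range n).filter fun b => decide (a < b)).map
      fun b => (1 : R) - (x (a+1) - x (b+1)) ^ 2).prod)).prod

theorem thetaTilde_eq_thetaPoly (n : ℕ) : thetaTilde n = thetaPoly n (yy n) := rfl

theorem map_thetaPoly {S F : Type*} [Ring R] [Ring S] [FunLike F R S] [RingHomClass F R S]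
    (f : F) (n : ℕ) (x : ℕ → R) : f (thetaPoly n x) = thetaPoly n (f ∘ x) := by
  simp [thetaPoly, map_list_prod, List.map_map, Function.comp_def]

/-- The symmetric form of `Θ`: `1 - (a - b)^2 = (1 - (a - b)) (1 - (b - a))`, and the diagonal
factors are `1`. -/
theorem thetaPoly_eq_prod_prod [CommRing R] (n : ℕ) (x : ℕ → R) :
    thetaPoly n x = ∏ a ∈ Icc 1 n, ∏ b ∈ Icc 1 n, (1 - (x a - x b)) := by
  have hpairs : thetaPoly n x =
      ∏ a ∈ range n, ∏ b ∈ range n with a < b, (1 - (x (a + 1) - x (b + 1)) ^ 2) := rfl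
  have hshift : ∏ a ∈ Icc 1 n, ∏ b ∈ Icc 1 n, (1 - (x a - x b)) =
      ∏ a ∈ range n, ∏ b ∈ range n, (1 - (x (a + 1) - x (b + 1))) := by
    simp only [← prod_range_comp_add_one]
  rw [hpairs, hshift, prod_prod_eq_prod_prod_lt _ _ fun a => by simp]
  exact prod_congr rfl fun a _ => prod_congr rfl fun b _ => by ring

theorem thetaPoly_eq_zero [CommRing R] {n i j : ℕ} {x : ℕ → R} (hi : i ∈ Icc 1 n)
    (hj : j ∈ Icc 1 n) (h : x i - x j = 1) : thetaPoly n x = 0 := by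
  rw [thetaPoly_eq_prod_prod]
  exact prod_eq_zero hi (prod_eq_zero hj (by rw [h, sub_self]))

theorem thetaPoly_comp_perm [CommRing R] {n : ℕ} {σ : Equiv.Perm ℕ}
    (hσ : {a | σ a ≠ a} ⊆ Icc 1 n) {x x' : ℕ → R} (hx : ∀ j ∈ Icc 1 n, x' j = x (σ j)) :
    thetaPoly n x' = thetaPoly n x := by
  rw [thetaPoly_eq_prod_prod, thetaPoly_eq_prod_prod]
  calc ∏ a ∈ Icc 1 n, ∏ b ∈ Icc 1 n, (1 - (x' a - x' b))
      = ∏ a ∈ Icc 1 n, ∏ b ∈ Icc 1 n, (1 - (x (σ a) - x (σ b))) :=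
        prod_congr rfl fun a ha => prod_congr rfl fun b hb => by rw [hx a ha, hx b hb]
    _ = ∏ a ∈ Icc 1 n, ∏ b ∈ Icc 1 n, (1 - (x (σ a) - x b)) :=
        prod_congr rfl fun a _ => σ.prod_comp _ (fun b => 1 - (x (σ a) - x b)) hσ
    _ = ∏ a ∈ Icc 1 n, ∏ b ∈ Icc 1 n, (1 - (x a - x b)) :=
        σ.prod_comp _ (fun a => ∏ b ∈ Icc 1 n, (1 - (x a - x b))) hσ

end ThetaPoly

variable {n d : ℕ} {ρ : sVV n →ₐ[ℂ] Matrix (Fin d) (Fin d) ℂ}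

def weight (ρ : sVV n →ₐ[ℂ] Matrix (Fin d) (Fin d) ℂ) (t : Fin d) (j : ℕ) : ℂ := ρ (yy n j) t t

theorem IsCalibrated.map_yy (hcal : IsCalibrated ρ) (j : ℕ) :
    ρ (yy n j) = diagonal fun t => weight ρ t j := by
  by_cases hj : 1 ≤ j ∧ j ≤ n
  · exact (hcal j hj.1 hj.2).diagonal_diag.symm
  · ext t u
    simp [weight, yy, hj]

theorem IsCalibrated.map_thetaTilde (hcal : IsCalibrated ρ) :
    ρ (thetaTilde n) = diagonal fun t => thetaPoly n (weight ρ t) := by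
  have hy : ρ ∘ yy n = diagonalRingHom (Fin d) ℂ ∘ fun j t => weight ρ t j :=
    funext hcal.map_yy
  rw [thetaTilde_eq_thetaPoly, map_thetaPoly, hy, ← map_thetaPoly]
  refine congrArg diagonal (funext fun t => ?_)
  exact map_thetaPoly (Pi.evalRingHom (fun _ : Fin d => ℂ) t) n fun j t => weight ρ t j

theorem IsCalibrated.weight_of_egen_ne_zero (hcal : IsCalibrated ρ) {i : ℕ}
    (hi : 1 ≤ i ∧ i ≤ n - 1) {t u : Fin d} (he : ρ (egen n i hi) t u ≠ 0) :
    weight ρ t i - weight ρ t (i + 1) = 1 ∧ weight ρ u (i + 1) - weight ρ u i = 1 := by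
  have hleft := congr_fun₂ (congrArg ρ (yy_sub_yy_mul_egen hi)) t u
  have hright := congr_fun₂ (congrArg ρ (egen_mul_yy_sub_yy hi)) t u
  simp only [map_mul, map_sub, map_neg, hcal.map_yy, diagonal_sub, diagonal_mul, mul_diagonal,
    Matrix.neg_apply] at hleft hright
  constructor
  · exact mul_right_cancel₀ he (hleft.trans (one_mul _).symm)
  · linear_combination -mul_left_cancel₀ he (hright.trans (mul_neg_one _).symm)

theorem IsCalibrated.weight_of_sgen_ne_zero (hcal : IsCalibrated ρ) {i : ℕ}
    (hi : 1 ≤ i ∧ i ≤ n - 1) {t u : Fin d} (htu : t ≠ u) (hs : ρ (sgen n i hi) t u ≠ 0)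
    (he : ρ (egen n i hi) t u = 0) {j : ℕ} (hj : j ∈ Icc 1 n) :
    weight ρ u j = weight ρ t (Equiv.swap i (i + 1) j) := by
  have h1 := congr_fun₂ (congrArg ρ (sgen_mul_yy_sub_yy_mul_sgen hi)) t u
  have h2 := congr_fun₂ (congrArg ρ (yy_mul_sgen_sub_sgen_mul_yy hi)) t u
  simp only [map_mul, map_sub, map_neg, map_one, hcal.map_yy, Matrix.sub_apply, diagonal_mul,
    mul_diagonal, Matrix.neg_apply, one_apply_ne htu, he] at h1 h2
  rcases eq_or_ne j i with rfl | hji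
  · rw [Equiv.swap_apply_left]
    exact mul_left_cancel₀ hs (by linear_combination h1)
  rcases eq_or_ne j (i + 1) with rfl | hji'
  · rw [Equiv.swap_apply_right]
    exact mul_left_cancel₀ hs (by linear_combination -h2)
  · have h3 := congr_fun₂ (congrArg ρ (sgen_mul_yy_comm hi (by simpa using hj) ⟨hji, hji'⟩)) t u
    simp only [map_mul, hcal.map_yy, diagonal_mul, mul_diagonal] at h3
    rw [Equiv.swap_apply_of_ne_of_ne hji hji']
    exact mul_left_cancel₀ hs (by linear_combination h3)

theorem IsCalibrated.thetaPoly_weight_eq_zero (hcal : IsCalibrated ρ) {i : ℕ}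
    (hi : 1 ≤ i ∧ i ≤ n - 1) {t u : Fin d} (he : ρ (egen n i hi) t u ≠ 0) :
    thetaPoly n (weight ρ t) = 0 ∧ thetaPoly n (weight ρ u) = 0 := by
  obtain ⟨ht, hu⟩ := hcal.weight_of_egen_ne_zero hi he
  have hi₀ : i ∈ Icc 1 n := mem_Icc.mpr ⟨hi.1, by omega⟩
  have hi₁ : i + 1 ∈ Icc 1 n := mem_Icc.mpr ⟨by omega, by omega⟩
  exact ⟨thetaPoly_eq_zero hi₀ hi₁ ht, thetaPoly_eq_zero hi₁ hi₀ hu⟩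

theorem IsCalibrated.thetaPoly_weight_eq_of_sgen_ne_zero (hcal : IsCalibrated ρ) {i : ℕ}
    (hi : 1 ≤ i ∧ i ≤ n - 1) {t u : Fin d} (hs : ρ (sgen n i hi) t u ≠ 0) :
    thetaPoly n (weight ρ t) = thetaPoly n (weight ρ u) := by
  rcases eq_or_ne t u with rfl | htu
  · rfl
  by_cases he : ρ (egen n i hi) t u = 0
  · have hswap : {a | Equiv.swap i (i + 1) a ≠ a} ⊆ Icc 1 n := by
      intro a ha
      rw [Set.mem_ofPred_eq, Equiv.swap_apply_ne_self_iff] at ha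
      simp only [coe_Icc, Set.mem_Icc]
      omega
    exact (thetaPoly_comp_perm hswap fun j hj => hcal.weight_of_sgen_ne_zero hi htu hs he hj).symm
  · obtain ⟨ht, hu⟩ := hcal.thetaPoly_weight_eq_zero hi he
    rw [ht, hu]

theorem IsCalibrated.commute_map_thetaTilde (hcal : IsCalibrated ρ) (a : sVV n) :
    Commute (ρ (thetaTilde n)) (ρ a) := by
  suffices ρ.range ≤ Subalgebra.centralizer ℂ {ρ (thetaTilde n)} from
    (Subalgebra.mem_centralizer_iff ℂ).mp (this ⟨a, rfl⟩) _ rfl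
  refine RingQuot.range_le_of_forall_ι_mem ρ fun g => ?_
  rw [Subalgebra.mem_centralizer_iff]
  rintro _ rfl
  change Commute _ _
  rw [hcal.map_thetaTilde]
  cases g with
  | Y j hj =>
    change Commute _ (ρ (ygen n j hj))
    rw [← yy_eq_ygen hj, hcal.map_yy]
    exact commute_diagonal _ _
  | E i hi =>
    refine commute_diagonal_iff.mpr fun t u he => ?_
    obtain ⟨ht, hu⟩ := hcal.thetaPoly_weight_eq_zero hi he
    rw [ht, hu]
  | S i hi =>
    exact commute_diagonal_iff.mpr fun t u hs => hcal.thetaPoly_weight_eq_of_sgen_ne_zero hi hs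

open LinearMap in
theorem IsIndecomposableRep.eq_zero_or_eq_one (hind : IsIndecomposableRep ρ)
    {P : Matrix (Fin d) (Fin d) ℂ} (hP : IsIdempotentElem P) (hcomm : ∀ a, Commute P (ρ a)) :
    P = 0 ∨ P = 1 := by
  by_contra! hP01
  set f := toLinAlgEquiv' P
  have hf : IsIdempotentElem f := hP.map toLinAlgEquiv'
  have hinv (a : sVV n) := hf.commute_iff.mp ((hcomm a).map toLinAlgEquiv')
  refine hind ⟨LinearMap.range f, LinearMap.ker f, ?_, ?_, hf.isCompl, fun a x hx => (hinv a).1 hx,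
    fun a x hx => (hinv a).2 hx⟩
  · rw [Ne, LinearMap.range_eq_bot, map_eq_zero_iff _ toLinAlgEquiv'.injective]
    exact hP01.1
  · rw [Ne, hf.ker_eq_range_one_sub, LinearMap.range_eq_bot, sub_eq_zero, eq_comm,
      ← map_one toLinAlgEquiv', toLinAlgEquiv'.injective.eq_iff]
    exact hP01.2

theorem IsIndecomposableRep.eq_of_commute_diagonal (hind : IsIndecomposableRep ρ)
    {θ : Fin d → ℂ} (hθ : ∀ a, Commute (diagonal θ) (ρ a)) (t u : Fin d) : θ t = θ u := by
  by_contra hne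
  set P := diagonal ((fun c => if c = θ t then (1 : ℂ) else 0) ∘ θ)
  have hP : IsIdempotentElem P := by
    simp only [IsIdempotentElem, P, diagonal_mul_diagonal]
    congr 1
    funext r
    simp only [Function.comp_apply]
    split_ifs <;> simp
  rcases hind.eq_zero_or_eq_one hP fun a => (hθ a).diagonal_comp _ with h | h
  · simpa [P] using congr_fun₂ h t t
  · simpa [P, Ne.symm hne] using congr_fun₂ h u u

theorem thetaTilde_acts_by_zero_general (n d : ℕ)
    (ρ : sVV n →ₐ[ℂ] Matrix (Fin d) (Fin d) ℂ)
    (hcal : IsCalibrated ρ) (hind : IsIndecomposableRep ρ)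
    (hne : ∃ i : ℕ, 1 ≤ i ∧ i ≤ n - 1 ∧ ρ (ee n i) ≠ 0) :
    ρ (thetaTilde n) = 0 := by
  obtain ⟨i, hi₁, hi₂, he⟩ := hne
  rw [ee, dif_pos ⟨hi₁, hi₂⟩] at he
  obtain ⟨t, u, hetu⟩ : ∃ t u, ρ (egen n i ⟨hi₁, hi₂⟩) t u ≠ 0 := by
    by_contra! h
    exact he (Matrix.ext h)
  have hθ (a : sVV n) : Commute (diagonal fun r => thetaPoly n (weight ρ r)) (ρ a) :=
    hcal.map_thetaTilde ▸ hcal.commute_map_thetaTilde a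
  have hθt := (hcal.thetaPoly_weight_eq_zero ⟨hi₁, hi₂⟩ hetu).1
  rw [hcal.map_thetaTilde, ← diagonal_zero]
  exact congrArg diagonal (funext fun r => (hind.eq_of_commute_diagonal hθ r t).trans hθt)

/-- If `ρ` is an indecomposable calibrated representation of `sVV n` on which
some `e_i` acts by a nonzero matrix, then `ρ(Θ̃) = 0`. -/
theorem thetaTilde_acts_by_zero (n d : ℕ) (hn : 2 ≤ n) (hd : 1 ≤ d)
    (ρ : sVV n →ₐ[ℂ] Matrix (Fin d) (Fin d) ℂ)
    (hcal : IsCalibrated ρ) (hind : IsIndecomposableRep ρ)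
    (hne : ∃ i : ℕ, 1 ≤ i ∧ i ≤ n - 1 ∧ ρ (ee n i) ≠ 0) :
    ρ (thetaTilde n) = 0 :=
  thetaTilde_acts_by_zero_general n d ρ hcal hind hne

end Periplectic
end
end

section
/- Let n ≥ 2, d ≥ 1 and let ρ : sVV_n → Mat_d(ℂ) be a calibrated representation which is indecomposable (there is no direct sum decomposition ℂ^d = U ⊕ W with U and W nonzero subspaces each invariant under ρ(a) for all a ∈ sVV_n) and such that ρ(e_i) ≠ 0 for some 1 ≤ i ≤ n−1. Then for every symmetric polynomial f ∈ ℂ[x_1,…,x_n] (invariant under all permutations of the variables) and every c ∈ ℂ, one has ρ(Θ̃·f(y_1,…,y_n) + c·1) = c·Id_d, where Θ̃ = ∏_{1 ≤ i < j ≤ n} (1 − (y_i − y_j)^2) ∈ sVV_n. -/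
noncomputable section

namespace Periplectic

/-- Evaluation of a polynomial `f ∈ ℂ[x_1, …, x_n]` at the commuting elements
`y_1, …, y_n` of `sVV n` (monomials are expanded in the order `y_1, y_2, …, y_n`). -/
def evalY (n : ℕ) (f : MvPolynomial (Fin n) ℂ) : sVV n :=
  ∑ m ∈ f.support,
    f.coeff m • ((List.finRange n).map (fun i : Fin n => yy n (i.val + 1) ^ m i)).prod


/-! ### Auxiliary lemmas -/

section Aux

/-- pair product of `1 - (z a - z b)^2` over shifted indices. -/
def Pfun (n : ℕ) (z : ℕ → ℂ) : ℂ :=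
  ∏ a ∈ Finset.range n, ∏ b ∈ Finset.range n,
    if a < b then 1 - (z (a+1) - z (b+1))^2 else 1

lemma finset_range_prod {M : Type*} [CommMonoid M] (n : ℕ) (f : ℕ → M) :
    ∏ a ∈ Finset.range n, f a = ((List.range n).map f).prod := rfl

lemma finset_filter_range_prod {M : Type*} [CommMonoid M] (n : ℕ) (p : ℕ → Prop)
    [DecidablePred p] (f : ℕ → M) :
    ∏ b ∈ (Finset.range n).filter p, f b
      = (((List.range n).filter fun b => decide (p b)).map f).prod := rfl

lemma Pfun_eq_list (n : ℕ) (z : ℕ → ℂ) :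
    ((List.range n).map (fun a => (((List.range n).filter fun b => decide (a < b)).map
      (fun b => (1:ℂ) - (z (a+1) - z (b+1))^2)).prod)).prod = Pfun n z := by
  rw [Pfun, finset_range_prod]
  congr 1
  apply List.map_congr_left
  intro a _
  rw [← Finset.prod_filter, finset_filter_range_prod]

lemma Pfun_eq_pairs (n : ℕ) (z : ℕ → ℂ) :
    Pfun n z = ∏ p ∈ (Finset.range n ×ˢ Finset.range n).filter (fun p => p.1 < p.2),
      (1 - (z (p.1+1) - z (p.2+1))^2) := by
  rw [Finset.prod_filter]
  rw [Finset.prod_product' _ _ (fun a b => if a < b then 1 - (z (a+1) - z (b+1))^2 else 1)]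
  rfl

lemma Pfun_eq_zero (n i : ℕ) (hi1 : 1 ≤ i) (hi2 : i < n) (z : ℕ → ℂ)
    (hz : (z i - z (i+1))^2 = 1) : Pfun n z = 0 := by
  rw [Pfun]
  apply Finset.prod_eq_zero (i := i - 1) (Finset.mem_range.mpr (by omega))
  apply Finset.prod_eq_zero (i := i) (Finset.mem_range.mpr hi2)
  rw [if_pos (by omega)]
  have h : i - 1 + 1 = i := by omega
  rw [h, hz]
  ring

lemma Pfun_swap (n p q : ℕ) (hp : p < n) (hq : q < n) (z : ℕ → ℂ) :
    Pfun n (z ∘ Equiv.swap (p+1) (q+1)) = Pfun n z := by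
  rw [Pfun_eq_pairs, Pfun_eq_pairs]
  set σ : Equiv.Perm ℕ := Equiv.swap p q with hσ
  have hcomp : ∀ a : ℕ, z (Equiv.swap (p+1) (q+1) (a+1)) = z (σ a + 1) := by
    intro a
    by_cases hap : a = p
    · simp [hap, σ, Equiv.swap_apply_left]
    · by_cases haq : a = q
      · simp [haq, σ, Equiv.swap_apply_right]
      · have h1 : a + 1 ≠ p + 1 := by omega
        have h2 : a + 1 ≠ q + 1 := by omega
        simp [σ, Equiv.swap_apply_of_ne_of_ne, h1, h2, hap, haq,
          Equiv.swap_apply_of_ne_of_ne hap haq]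
  have hlt : ∀ a, a < n → σ a < n := by
    intro a ha
    by_cases hap : a = p
    · simpa [hap, σ, Equiv.swap_apply_left] using hq
    · by_cases haq : a = q
      · simpa [haq, σ, Equiv.swap_apply_right] using hp
      · simpa [σ, Equiv.swap_apply_of_ne_of_ne hap haq] using ha
  have hswap : ∀ a, σ (σ a) = a := fun a => Equiv.swap_apply_self _ _ _
  have hinj : ∀ a b : ℕ, σ a = σ b → a = b := by
    intro a b h; have h2 := congrArg σ h; rwa [hswap, hswap] at h2
  refine Finset.prod_nbij'
    (fun r => if σ r.1 < σ r.2 then (σ r.1, σ r.2) else (σ r.2, σ r.1))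
    (fun r => if σ r.1 < σ r.2 then (σ r.1, σ r.2) else (σ r.2, σ r.1))
    ?_ ?_ ?_ ?_ ?_
  · intro r hr
    simp only [Finset.mem_filter, Finset.mem_product, Finset.mem_range] at hr ⊢
    obtain ⟨⟨h1, h2⟩, h3⟩ := hr
    have hne : σ r.1 ≠ σ r.2 := fun h => absurd (hinj _ _ h) (by omega)
    by_cases h : σ r.1 < σ r.2
    · simp [h, hlt _ h1, hlt _ h2]
    · simp [h, hlt _ h1, hlt _ h2]; omega
  · intro r hr
    simp only [Finset.mem_filter, Finset.mem_product, Finset.mem_range] at hr ⊢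
    obtain ⟨⟨h1, h2⟩, h3⟩ := hr
    have hne : σ r.1 ≠ σ r.2 := fun h => absurd (hinj _ _ h) (by omega)
    by_cases h : σ r.1 < σ r.2
    · simp [h, hlt _ h1, hlt _ h2]
    · simp [h, hlt _ h1, hlt _ h2]; omega
  · intro r hr
    simp only [Finset.mem_filter, Finset.mem_product, Finset.mem_range] at hr
    obtain ⟨⟨h1, h2⟩, h3⟩ := hr
    by_cases h : σ r.1 < σ r.2
    · simp [h, hswap, h3]
    · simp only [h, if_neg, ite_false]
      simp [hswap, if_neg (by omega : ¬ r.2 < r.1)]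
  · intro r hr
    simp only [Finset.mem_filter, Finset.mem_product, Finset.mem_range] at hr
    obtain ⟨⟨h1, h2⟩, h3⟩ := hr
    by_cases h : σ r.1 < σ r.2
    · simp [h, hswap, h3]
    · simp only [h, ite_false]
      simp [hswap, if_neg (by omega : ¬ r.2 < r.1)]
  · intro r hr
    simp only [Function.comp_apply, hcomp]
    by_cases h : σ r.1 < σ r.2
    · simp [h]
    · simp only [h, ite_false]
      ring

lemma diag_list_prod {d : ℕ} {α : Type*} (l : List α) (f : α → (Fin d → ℂ)) :
    (l.map fun a => Matrix.diagonal (f a)).prod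
      = Matrix.diagonal (fun k => (l.map fun a => f a k).prod) := by
  induction l with
  | nil => simp [← Matrix.diagonal_one]
  | cons a l ih =>
      simp only [List.map_cons, List.prod_cons, ih, Matrix.diagonal_mul_diagonal]

lemma eq_one_of_mul_eq {t a : ℂ} (ha : a ≠ 0) (h : t * a = a) : t = 1 :=
  mul_right_cancel₀ ha (h.trans (one_mul a).symm)

lemma eq_neg_one_of_mul_eq {t a : ℂ} (ha : a ≠ 0) (h : a * t = -a) : t = -1 := by
  have h2 : a * t = a * (-1) := by rw [h]; ring
  exact mul_left_cancel₀ ha h2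

/-- The submodule of vectors vanishing on coordinates satisfying `P`. -/
def coordSubmodule {d : ℕ} (P : Fin d → Prop) : Submodule ℂ (Fin d → ℂ) where
  carrier := {x | ∀ k, P k → x k = 0}
  add_mem' := by intro a b ha hb k hk; simp [ha k hk, hb k hk]
  zero_mem' := by intro k hk; rfl
  smul_mem' := by intro c x hx k hk; simp [hx k hk]

lemma mem_coordSubmodule {d : ℕ} (P : Fin d → Prop) (x : Fin d → ℂ) :
    x ∈ coordSubmodule P ↔ ∀ k, P k → x k = 0 := Iff.rfl

end Aux

/-- If `ρ` is an indecomposable calibrated representation of `sVV n` with a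
nonzero action of some `e_i`, then for every symmetric polynomial `f` and every `c ∈ ℂ` the
central element `Θ̃ · f(y_1, …, y_n) + c · 1` acts by the scalar matrix `c · Id`. -/
theorem center_acts_by_constant (n d : ℕ) (hn : 2 ≤ n) (hd : 1 ≤ d)
    (ρ : sVV n →ₐ[ℂ] Matrix (Fin d) (Fin d) ℂ)
    (hcal : IsCalibrated ρ) (hind : IsIndecomposableRep ρ)
    (hne : ∃ i : ℕ, 1 ≤ i ∧ i ≤ n - 1 ∧ ρ (ee n i) ≠ 0)
    (f : MvPolynomial (Fin n) ℂ) (hf : f.IsSymmetric) (c : ℂ) :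
    ρ (thetaTilde n * evalY n f + algebraMap ℂ (sVV n) c)
      = c • (1 : Matrix (Fin d) (Fin d) ℂ) := by
  classical
  -- diagonal form of the y-generators
  obtain ⟨Z, hyd⟩ : ∃ Z : ℕ → Fin d → ℂ, ∀ j, ρ (yy n j) = Matrix.diagonal (Z j) := by
    refine ⟨fun j k => ρ (yy n j) k k, fun j => ?_⟩
    ext k l
    by_cases hkl : k = l
    · subst hkl; rw [Matrix.diagonal_apply_eq]
    · rw [Matrix.diagonal_apply_ne _ hkl]
      by_cases h : 1 ≤ j ∧ j ≤ n
      · exact hcal j h.1 h.2 hkl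
      · have h0 : yy n j = 0 := dif_neg h
        rw [h0, map_zero]
        rfl
  have hZ0 : ∀ j, ¬(1 ≤ j ∧ j ≤ n) → ∀ k, Z j k = 0 := by
    intro j hj k
    have h0 : yy n j = 0 := dif_neg hj
    have h1 := hyd j
    rw [h0, map_zero] at h1
    have h2 := congrFun (congrFun h1 k) k
    rw [Matrix.diagonal_apply_eq] at h2
    exact h2.symm.trans rfl
  -- generator translations
  have hYm : ∀ j (hj : 1 ≤ j ∧ j ≤ n),
      ρ (RingQuot.mkAlgHom ℂ (Rel n) (fY n j hj)) = Matrix.diagonal (Z j) := by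
    intro j hj
    rw [← hyd j]
    congr 1
    rw [show yy n j = ygen n j hj from dif_pos hj]
    rfl
  have hEm : ∀ i (hi : 1 ≤ i ∧ i ≤ n - 1),
      ρ (RingQuot.mkAlgHom ℂ (Rel n) (fE n i hi)) = ρ (ee n i) := by
    intro i hi; congr 1
    rw [show ee n i = egen n i hi from dif_pos hi]
    rfl
  have hSm : ∀ i (hi : 1 ≤ i ∧ i ≤ n - 1),
      ρ (RingQuot.mkAlgHom ℂ (Rel n) (fS n i hi)) = ρ (ss n i) := by
    intro i hi; congr 1
    rw [show ss n i = sgen n i hi from dif_pos hi]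
    rfl
  have hrel : ∀ {x y : FA n}, Rel n x y →
      ρ (RingQuot.mkAlgHom ℂ (Rel n) x) = ρ (RingQuot.mkAlgHom ℂ (Rel n) y) :=
    fun h => congrArg ρ (RingQuot.mkAlgHom_rel ℂ h)
  -- matrix relations
  have R1 : ∀ i (hi : 1 ≤ i ∧ i ≤ n - 1),
      Matrix.diagonal (fun k => Z i k - Z (i+1) k) * ρ (ee n i) = ρ (ee n i) := by
    intro i hi
    have hyi : 1 ≤ i ∧ i ≤ n := by omega
    have hyi1 : 1 ≤ i + 1 ∧ i + 1 ≤ n := by omega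
    have h := hrel (Rel.ydiff_e i hi hyi hyi1)
    simp only [map_mul, map_sub] at h
    rw [hYm i hyi, hYm (i+1) hyi1, hEm i hi, Matrix.diagonal_sub] at h
    exact h
  have R2 : ∀ i (hi : 1 ≤ i ∧ i ≤ n - 1),
      ρ (ee n i) * Matrix.diagonal (fun k => Z i k - Z (i+1) k) = -ρ (ee n i) := by
    intro i hi
    have hyi : 1 ≤ i ∧ i ≤ n := by omega
    have hyi1 : 1 ≤ i + 1 ∧ i + 1 ≤ n := by omega
    have h := hrel (Rel.e_ydiff i hi hyi hyi1)
    simp only [map_mul, map_sub, map_neg] at h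
    rw [hYm i hyi, hYm (i+1) hyi1, hEm i hi, Matrix.diagonal_sub] at h
    exact h
  have R3 : ∀ i (hi : 1 ≤ i ∧ i ≤ n - 1) j (hj : 1 ≤ j ∧ j ≤ n),
      j ≠ i → j ≠ i + 1 →
      ρ (ss n i) * Matrix.diagonal (Z j) = Matrix.diagonal (Z j) * ρ (ss n i) := by
    intro i hi j hj h1 h2
    have h := hrel (Rel.sy_comm i j hi hj ⟨h1, h2⟩)
    simp only [map_mul] at h
    rwa [hYm j hj, hSm i hi] at h
  have R4 : ∀ i (hi : 1 ≤ i ∧ i ≤ n - 1),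
      ρ (ss n i) * Matrix.diagonal (Z i) - Matrix.diagonal (Z (i+1)) * ρ (ss n i)
        = -ρ (ee n i) - 1 := by
    intro i hi
    have hyi : 1 ≤ i ∧ i ≤ n := by omega
    have hyi1 : 1 ≤ i + 1 ∧ i + 1 ≤ n := by omega
    have h := hrel (Rel.sy_rel i hi hyi hyi1)
    simp only [map_mul, map_sub, map_neg, map_one] at h
    rwa [hYm i hyi, hYm (i+1) hyi1, hEm i hi, hSm i hi] at h
  have R5 : ∀ i (hi : 1 ≤ i ∧ i ≤ n - 1),
      Matrix.diagonal (Z i) * ρ (ss n i) - ρ (ss n i) * Matrix.diagonal (Z (i+1))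
        = ρ (ee n i) - 1 := by
    intro i hi
    have hyi : 1 ≤ i ∧ i ≤ n := by omega
    have hyi1 : 1 ≤ i + 1 ∧ i + 1 ≤ n := by omega
    have h := hrel (Rel.ys_rel i hi hyi hyi1)
    simp only [map_mul, map_sub, map_neg, map_one] at h
    rwa [hYm i hyi, hYm (i+1) hyi1, hEm i hi, hSm i hi] at h
  -- entrywise consequences
  have hEentry : ∀ i (hi : 1 ≤ i ∧ i ≤ n - 1) (k l : Fin d), ρ (ee n i) k l ≠ 0 →
      Z i k - Z (i+1) k = 1 ∧ Z i l - Z (i+1) l = -1 := by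
    intro i hi k l hkl
    constructor
    · have h : (Matrix.diagonal (fun k => Z i k - Z (i+1) k) * ρ (ee n i)) k l = ρ (ee n i) k l :=
        congrFun (congrFun (R1 i hi) k) l
      rw [Matrix.diagonal_mul] at h
      exact eq_one_of_mul_eq hkl h
    · have h : (ρ (ee n i) * Matrix.diagonal (fun k => Z i k - Z (i+1) k)) k l = (-ρ (ee n i)) k l :=
        congrFun (congrFun (R2 i hi) k) l
      rw [Matrix.mul_diagonal, Matrix.neg_apply] at h
      exact eq_neg_one_of_mul_eq hkl h
  set θf : Fin d → ℂ := fun k => Pfun n (fun j => Z j k) with hθdef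
  have hθE : ∀ i (hi : 1 ≤ i ∧ i ≤ n - 1) (k l : Fin d), ρ (ee n i) k l ≠ 0 →
      θf k = 0 ∧ θf l = 0 := by
    intro i hi k l hkl
    obtain ⟨h1, h2⟩ := hEentry i hi k l hkl
    constructor
    · apply Pfun_eq_zero n i hi.1 (by omega)
      rw [h1]; norm_num
    · apply Pfun_eq_zero n i hi.1 (by omega)
      rw [h2]; norm_num
  have hSentry : ∀ i (hi : 1 ≤ i ∧ i ≤ n - 1) (k l : Fin d), k ≠ l →
      ρ (ss n i) k l ≠ 0 → θf k = θf l := by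
    intro i hi k l hkl hS
    by_cases hE : ρ (ee n i) k l = 0
    · -- swap case
      have h4 : (ρ (ss n i) * Matrix.diagonal (Z i)) k l
          - (Matrix.diagonal (Z (i+1)) * ρ (ss n i)) k l = (-ρ (ee n i) - 1) k l := by
        rw [← Matrix.sub_apply, R4 i hi]
      rw [Matrix.mul_diagonal, Matrix.diagonal_mul, Matrix.sub_apply, Matrix.neg_apply,
        Matrix.one_apply_ne hkl, hE] at h4
      have h4' : ρ (ss n i) k l * Z i l = Z (i+1) k * ρ (ss n i) k l := by
        linear_combination h4
      have e1 : Z i l = Z (i+1) k := by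
        have := h4'.trans (mul_comm _ _)
        exact mul_left_cancel₀ hS this
      have h5 : (Matrix.diagonal (Z i) * ρ (ss n i)) k l
          - (ρ (ss n i) * Matrix.diagonal (Z (i+1))) k l = (ρ (ee n i) - 1) k l := by
        rw [← Matrix.sub_apply, R5 i hi]
      rw [Matrix.mul_diagonal, Matrix.diagonal_mul, Matrix.sub_apply,
        Matrix.one_apply_ne hkl, hE] at h5
      have e2 : Z i k = Z (i+1) l := by
        have h5' : Z i k * ρ (ss n i) k l = ρ (ss n i) k l * Z (i+1) l := by
          linear_combination h5
        have := (mul_comm (Z i k) (ρ (ss n i) k l)).symm.trans h5'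
        exact mul_left_cancel₀ hS this
      have e3 : ∀ j, j ≠ i → j ≠ i + 1 → Z j l = Z j k := by
        intro j hj1 hj2
        by_cases hj : 1 ≤ j ∧ j ≤ n
        · have h3 : (ρ (ss n i) * Matrix.diagonal (Z j)) k l
              = (Matrix.diagonal (Z j) * ρ (ss n i)) k l := by
            rw [R3 i hi j hj hj1 hj2]
          rw [Matrix.mul_diagonal, Matrix.diagonal_mul] at h3
          have := h3.trans (mul_comm _ _)
          exact (mul_left_cancel₀ hS this)
        · rw [hZ0 j hj l, hZ0 j hj k]
      -- assemble the swap
      have hw : (fun j => Z j l) = (fun j => Z j k) ∘ (Equiv.swap i (i+1)) := by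
        funext j
        by_cases hji : j = i
        · subst hji
          simp only [Function.comp_apply, Equiv.swap_apply_left]
          exact e1
        · by_cases hji1 : j = i + 1
          · subst hji1
            simp only [Function.comp_apply, Equiv.swap_apply_right]
            exact e2.symm
          · simp only [Function.comp_apply, Equiv.swap_apply_of_ne_of_ne hji hji1]
            exact e3 j hji hji1
      have hii : i - 1 + 1 = i := by omega
      have hsw := Pfun_swap n (i-1) i (by omega) (by omega) (fun j => Z j k)
      rw [hii] at hsw
      calc θf k = Pfun n (fun j => Z j k) := rfl
        _ = Pfun n ((fun j => Z j k) ∘ Equiv.swap i (i+1)) := hsw.symm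
        _ = Pfun n (fun j => Z j l) := by rw [← hw]
        _ = θf l := rfl
    · exact ((hθE i hi k l hE).1).trans ((hθE i hi k l hE).2).symm
  -- vanishing of off-diagonal entries relative to θf
  have hoffFA : ∀ x : FA n, ∀ k l : Fin d, θf k ≠ θf l →
      ρ (RingQuot.mkAlgHom ℂ (Rel n) x) k l = 0 := by
    intro x
    induction x using FreeAlgebra.induction with
    | grade0 r =>
        intro k l hkl
        have hne : k ≠ l := fun h => hkl (by rw [h])
        rw [AlgHom.commutes, AlgHom.commutes, Matrix.algebraMap_matrix_apply, if_neg hne]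
    | grade1 g =>
        cases g with
        | S i hi =>
            intro k l hkl
            have hne : k ≠ l := fun h => hkl (by rw [h])
            have hx : ρ (RingQuot.mkAlgHom ℂ (Rel n) (FreeAlgebra.ι ℂ (Gen.S i hi)))
                = ρ (ss n i) := hSm i hi
            rw [hx]
            by_contra hS
            exact hkl (hSentry i hi k l hne hS)
        | E i hi =>
            intro k l hkl
            have hx : ρ (RingQuot.mkAlgHom ℂ (Rel n) (FreeAlgebra.ι ℂ (Gen.E i hi)))
                = ρ (ee n i) := hEm i hi
            rw [hx]
            by_contra hEne
            obtain ⟨ha, hb⟩ := hθE i hi k l hEne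
            exact hkl (ha.trans hb.symm)
        | Y j hj =>
            intro k l hkl
            have hne : k ≠ l := fun h => hkl (by rw [h])
            have hx : ρ (RingQuot.mkAlgHom ℂ (Rel n) (FreeAlgebra.ι ℂ (Gen.Y j hj)))
                = Matrix.diagonal (Z j) := hYm j hj
            rw [hx]
            exact Matrix.diagonal_apply_ne _ hne
    | mul a b ha hb =>
        intro k l hkl
        simp only [map_mul]
        rw [Matrix.mul_apply]
        apply Finset.sum_eq_zero
        intro m _
        by_cases hm : θf k = θf m
        · rw [hb m l (by rw [← hm]; exact hkl), mul_zero]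
        · rw [ha k m hm, zero_mul]
    | add a b ha hb =>
        intro k l hkl
        simp only [map_add, Matrix.add_apply, ha k l hkl, hb k l hkl, add_zero]
  have hoff : ∀ a : sVV n, ∀ k l : Fin d, θf k ≠ θf l → ρ a k l = 0 := by
    intro a
    obtain ⟨x, rfl⟩ := RingQuot.mkAlgHom_surjective ℂ (Rel n) a
    exact hoffFA x
  -- θf is constant (indecomposability)
  have hconst : ∀ k l : Fin d, θf k = θf l := by
    by_contra hc
    push_neg at hc
    obtain ⟨k0, l0, hk0l0⟩ := hc
    apply hind
    refine ⟨coordSubmodule (fun k => θf k ≠ θf k0),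
      coordSubmodule (fun k => θf k = θf k0), ?_, ?_, ?_, ?_, ?_⟩
    · rw [Submodule.ne_bot_iff]
      refine ⟨Pi.single k0 1, ?_, ?_⟩
      · intro k hk
        exact Pi.single_eq_of_ne (fun h => hk (by rw [h])) 1
      · intro h
        have := congrFun h k0
        rw [Pi.single_eq_same] at this
        exact one_ne_zero this
    · rw [Submodule.ne_bot_iff]
      refine ⟨Pi.single l0 1, ?_, ?_⟩
      · intro k hk
        refine Pi.single_eq_of_ne (fun h => ?_) 1
        subst h
        exact hk0l0 hk.symm
      · intro h
        have := congrFun h l0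
        rw [Pi.single_eq_same] at this
        exact one_ne_zero this
    · constructor
      · rw [disjoint_iff]
        rw [Submodule.eq_bot_iff]
        rintro x ⟨hU, hW⟩
        funext k
        by_cases hk : θf k = θf k0
        · exact hW k hk
        · exact hU k hk
      · rw [codisjoint_iff, Submodule.eq_top_iff']
        intro x
        refine Submodule.mem_sup.mpr ⟨fun k => if θf k = θf k0 then x k else 0, ?_,
          fun k => if θf k = θf k0 then 0 else x k, ?_, ?_⟩
        · intro k hk
          exact if_neg hk
        · intro k hk
          exact if_pos hk
        · funext k
          by_cases hk : θf k = θf k0 <;> simp [hk]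
    · intro a x hx k hk
      show (Finset.univ.sum fun m => ρ a k m * x m) = 0
      apply Finset.sum_eq_zero
      intro m _
      by_cases hm : θf m = θf k0
      · rw [hoff a k m (by rw [hm]; exact hk), zero_mul]
      · rw [hx m hm, mul_zero]
    · intro a x hx k hk
      show (Finset.univ.sum fun m => ρ a k m * x m) = 0
      apply Finset.sum_eq_zero
      intro m _
      by_cases hm : θf m = θf k0
      · rw [hx m hm, mul_zero]
      · rw [hoff a k m (by rw [hk]; exact Ne.symm hm), zero_mul]
  -- θf vanishes somewhere, hence everywhere
  obtain ⟨i, hi1, hi2, hEne⟩ := hne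
  have hex : ∃ k l : Fin d, ρ (ee n i) k l ≠ 0 := by
    by_contra h
    push_neg at h
    apply hEne
    ext k l
    exact h k l
  obtain ⟨k1, l1, hk1⟩ := hex
  have hzero : ∀ m : Fin d, θf m = 0 := by
    intro m
    exact (hconst m k1).trans (hθE i ⟨hi1, hi2⟩ k1 l1 hk1).1
  -- the bridge: ρ(thetaTilde) is diagonal with entries θf
  have hTheta : ρ (thetaTilde n) = Matrix.diagonal θf := by
    rw [thetaTilde, map_list_prod, List.map_map]
    have hfac : ∀ a b : ℕ, ρ ((1 : sVV n) - (yy n (a+1) - yy n (b+1)) ^ 2)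
        = Matrix.diagonal (fun k => (1:ℂ) - (Z (a+1) k - Z (b+1) k)^2) := by
      intro a b
      rw [map_sub, map_one, map_pow, map_sub, hyd (a+1), hyd (b+1),
        Matrix.diagonal_sub, Matrix.diagonal_pow, ← Matrix.diagonal_one,
        Matrix.diagonal_sub]
      exact congrArg Matrix.diagonal (funext fun k => by simp [Pi.pow_apply])
    have hstep : ∀ a : ℕ,
        ρ ((((List.range n).filter fun b => decide (a < b)).map
            (fun b => (1 : sVV n) - (yy n (a+1) - yy n (b+1)) ^ 2)).prod)
        = Matrix.diagonal (fun k => (((List.range n).filter fun b => decide (a < b)).map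
            (fun b => (1:ℂ) - (Z (a+1) k - Z (b+1) k)^2)).prod) := by
      intro a
      rw [map_list_prod, List.map_map]
      have : (ρ ∘ fun b => (1 : sVV n) - (yy n (a+1) - yy n (b+1)) ^ 2)
          = fun b => Matrix.diagonal (fun k => (1:ℂ) - (Z (a+1) k - Z (b+1) k)^2) :=
        funext fun b => hfac a b
      rw [this]
      exact diag_list_prod _ (fun b k => (1:ℂ) - (Z (a+1) k - Z (b+1) k)^2)
    have : ((List.range n).map (ρ ∘ fun a =>
        ((((List.range n).filter fun b => decide (a < b)).map
          (fun b => (1 : sVV n) - (yy n (a+1) - yy n (b+1)) ^ 2)).prod))).prod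
        = ((List.range n).map (fun a => Matrix.diagonal
            (fun k => (((List.range n).filter fun b => decide (a < b)).map
              (fun b => (1:ℂ) - (Z (a+1) k - Z (b+1) k)^2)).prod))).prod := by
      congr 1
      apply List.map_congr_left
      intro a _
      exact hstep a
    rw [this, diag_list_prod _ (fun a k => (((List.range n).filter fun b => decide (a < b)).map
              (fun b => (1:ℂ) - (Z (a+1) k - Z (b+1) k)^2)).prod)]
    rw [hθdef]
    exact congrArg Matrix.diagonal (funext fun k => Pfun_eq_list n (fun j => Z j k))
  -- conclude
  rw [map_add, map_mul, hTheta]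
  have hθ0 : θf = fun _ => 0 := funext hzero
  rw [hθ0, Matrix.diagonal_zero, Matrix.zero_mul, zero_add, AlgHom.commutes,
    Algebra.algebraMap_eq_smul_one]

end Periplectic
end
end

section
/- Let n ≥ 2, d ≥ 1 and let ρ : sVV_n → Mat_d(ℂ) be a calibrated representation. Then for every 1 ≤ i ≤ n−1 and every index 1 ≤ ℓ ≤ d, the diagonal entries satisfy (ρ(y_i))_{ℓ,ℓ} ≠ (ρ(y_{i+1}))_{ℓ,ℓ}. -/
noncomputable section

namespace Periplectic

/-! The two relations (VV7) add up to the anticommutator identity `{s_i, y_i - y_{i+1}} = -2`.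
Comparing `(ℓ, ℓ)` entries in a calibrated representation, where `y_i - y_{i+1}` acts diagonally,
gives `2 (ρ s_i)_{ℓℓ} (ρ(y_i - y_{i+1}))_{ℓℓ} = -2`, so `ρ(y_i - y_{i+1})` has no zero diagonal entry. -/

theorem _root_.Matrix.IsDiag.mul_add_mul_apply_self {ι R : Type*} [Fintype ι] [CommSemiring R]
    {D : Matrix ι ι R} (hD : D.IsDiag) (S : Matrix ι ι R) (i : ι) :
    (S * D + D * S) i i = 2 * (S i i * D i i) := by
  have hSD : (S * D) i i = S i i * D i i := by
    rw [Matrix.mul_apply]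
    exact Finset.sum_eq_single i (fun k _ hk => by rw [hD hk, mul_zero]) (by simp)
  have hDS : (D * S) i i = D i i * S i i := by
    rw [Matrix.mul_apply]
    exact Finset.sum_eq_single i (fun k _ hk => by rw [hD hk.symm, zero_mul]) (by simp)
  rw [Matrix.add_apply, hSD, hDS]
  ring

theorem ss_mul_yy_sub_add_yy_sub_mul_ss {n i : ℕ} (hi : 1 ≤ i) (hin : i ≤ n - 1) :
    ss n i * (yy n i - yy n (i + 1)) + (yy n i - yy n (i + 1)) * ss n i = -2 := by
  have hs : 1 ≤ i ∧ i ≤ n - 1 := ⟨hi, hin⟩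
  have hy : 1 ≤ i ∧ i ≤ n := ⟨hi, by omega⟩
  have hy' : 1 ≤ i + 1 ∧ i + 1 ≤ n := ⟨by omega, by omega⟩
  have hsy : sgen n i hs * ygen n i hy - ygen n (i + 1) hy' * sgen n i hs = -egen n i hs - 1 := by
    simpa [sgen, ygen, egen] using RingQuot.mkAlgHom_rel ℂ (Rel.sy_rel i hs hy hy')
  have hys : ygen n i hy * sgen n i hs - sgen n i hs * ygen n (i + 1) hy' = egen n i hs - 1 := by
    simpa [sgen, ygen, egen] using RingQuot.mkAlgHom_rel ℂ (Rel.ys_rel i hs hy hy')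
  rw [ss, yy, yy, dif_pos hs, dif_pos hy, dif_pos hy']
  calc _ = (sgen n i hs * ygen n i hy - ygen n (i + 1) hy' * sgen n i hs)
          + (ygen n i hy * sgen n i hs - sgen n i hs * ygen n (i + 1) hy') := by
        rw [mul_sub, sub_mul]; abel
    _ = (-egen n i hs - 1) + (egen n i hs - 1) := by rw [hsy, hys]
    _ = -2 := by abel_nf; norm_num

theorem eigenvalues_must_move_general (n d : ℕ)
    (ρ : sVV n →ₐ[ℂ] Matrix (Fin d) (Fin d) ℂ) (hcal : IsCalibrated ρ) :
    ∀ i : ℕ, 1 ≤ i → i ≤ n - 1 → ∀ ℓ : Fin d,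
      ρ (yy n i) ℓ ℓ ≠ ρ (yy n (i+1)) ℓ ℓ := by
  intro i hi hin ℓ heq
  have hdiag : (ρ (yy n i) - ρ (yy n (i + 1))).IsDiag :=
    (hcal i hi (by omega)).sub (hcal (i + 1) (by omega) (by omega))
  have hanti := congrArg ρ (ss_mul_yy_sub_add_yy_sub_mul_ss hi hin)
  rw [map_add, map_mul, map_mul, map_sub, map_neg, map_ofNat] at hanti
  have hentry := congrFun (congrFun hanti ℓ) ℓ
  rw [hdiag.mul_add_mul_apply_self, Matrix.sub_apply, heq, sub_self, Matrix.neg_apply,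
    Matrix.ofNat_apply, if_pos rfl] at hentry
  norm_num at hentry

/-- In a calibrated representation of `sVV n`, consecutive Jucys–Murphy-type
eigenvalues always move: `(ρ(y_i))_{ℓℓ} ≠ (ρ(y_{i+1}))_{ℓℓ}` for all `1 ≤ i ≤ n-1`, `ℓ`. -/
theorem eigenvalues_must_move (n d : ℕ) (hn : 2 ≤ n) (hd : 1 ≤ d)
    (ρ : sVV n →ₐ[ℂ] Matrix (Fin d) (Fin d) ℂ) (hcal : IsCalibrated ρ) :
    ∀ i : ℕ, 1 ≤ i → i ≤ n - 1 → ∀ ℓ : Fin d,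
      ρ (yy n i) ℓ ℓ ≠ ρ (yy n (i+1)) ℓ ℓ :=
  eigenvalues_must_move_general n d ρ hcal

end Periplectic
end
end

section
/- Let n ≥ 2, d ≥ 1 and let ρ : sVV_n → Mat_d(ℂ) be a calibrated representation with ρ(y_1) = 0 (so ρ is a calibrated representation of the periplectic Brauer algebra A_n, with ρ(y_j) realizing the action of the Jucys–Murphy element Y_j). Then every diagonal entry of ρ(y_j) is an integer for all j = 2,…,n, and (ρ(y_j))_{ℓ,ℓ} ≠ (ρ(y_{j+1}))_{ℓ,ℓ} for every 1 ≤ ℓ ≤ d and every 1 ≤ j ≤ n−1. -/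
noncomputable section

/-!
The `y_j` act diagonally; let `y_i v_ℓ = a v_ℓ` and `y_{i+1} v_ℓ = b v_ℓ` on a basis vector `v_ℓ`.
The `(ℓ, ℓ)` entries of `s_i y_i - y_{i+1} s_i = -e_i - 1` and `y_i s_i - s_i y_{i+1} = e_i - 1`
add up to `(s_i)_{ℓℓ} (a - b) = -1`, so `a ≠ b`. If `(s_i)_{kℓ} ≠ 0` for some `k ≠ ℓ`, the
`(k, ℓ)` entry of the second relation shows that `b` is the eigenvalue of `y_i` on `v_k` unless
`(e_i)_{kℓ} ≠ 0`, and then `e_i (y_i - y_{i+1}) = -e_i` gives `a - b = -1`. Otherwise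
`s_i² = 1` gives `(s_i)_{ℓℓ}² = 1`, hence `(a - b)² = 1`. In every case `b` is an integer once
all eigenvalues of `y_i` are, and the induction starts from `y_1 = 0`.
-/

namespace Matrix

section IsDiag

variable {α ι : Type*} [NonUnitalNonAssocSemiring α] [Fintype ι] [DecidableEq ι]
  {A : Matrix ι ι α}

theorem IsDiag.mul_apply_right (hA : A.IsDiag) (M : Matrix ι ι α) (i j : ι) :
    (M * A) i j = M i j * A j j := by
  rw [← hA.diagonal_diag, mul_diagonal]
  simp

theorem IsDiag.mul_apply_left (hA : A.IsDiag) (M : Matrix ι ι α) (i j : ι) :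
    (A * M) i j = A i i * M i j := by
  rw [← hA.diagonal_diag, diagonal_mul]
  simp

end IsDiag

variable {K ι : Type*} [Field K] [CharZero K] [Fintype ι] [DecidableEq ι]
  {S E A B : Matrix ι ι K}

theorem diag_mul_sub_diag_eq_neg_one (hA : A.IsDiag) (hB : B.IsDiag)
    (hSA : S * A - B * S = -E - 1) (hAS : A * S - S * B = E - 1) (ℓ : ι) :
    S ℓ ℓ * (A ℓ ℓ - B ℓ ℓ) = -1 := by
  have h₁ := congrFun (congrFun hSA ℓ) ℓ
  have h₂ := congrFun (congrFun hAS ℓ) ℓ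
  simp only [sub_apply, neg_apply, one_apply_eq, hA.mul_apply_right, hA.mul_apply_left,
    hB.mul_apply_right, hB.mul_apply_left] at h₁ h₂
  have h : (2 : K) * (S ℓ ℓ * (A ℓ ℓ - B ℓ ℓ) + 1) = 0 := by linear_combination h₁ + h₂
  linear_combination (mul_eq_zero.mp h).resolve_left two_ne_zero

theorem diag_ne_of_relations (hA : A.IsDiag) (hB : B.IsDiag)
    (hSA : S * A - B * S = -E - 1) (hAS : A * S - S * B = E - 1) (ℓ : ι) :
    A ℓ ℓ ≠ B ℓ ℓ := by
  intro h
  simpa [h] using diag_mul_sub_diag_eq_neg_one hA hB hSA hAS ℓ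

theorem diag_eq_or_eq_sub_one_or_eq_add_one (hA : A.IsDiag) (hB : B.IsDiag)
    (hSA : S * A - B * S = -E - 1) (hAS : A * S - S * B = E - 1) (hS : S * S = 1)
    (hE : E * (A - B) = -E) (ℓ : ι) :
    (∃ k, B ℓ ℓ = A k k) ∨ B ℓ ℓ = A ℓ ℓ - 1 ∨ B ℓ ℓ = A ℓ ℓ + 1 := by
  have hx := diag_mul_sub_diag_eq_neg_one hA hB hSA hAS ℓ
  by_cases hoff : ∃ k, k ≠ ℓ ∧ S k ℓ ≠ 0
  · obtain ⟨k, hkℓ, hSkℓ⟩ := hoff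
    have hEkℓ : (A k k - B ℓ ℓ) * S k ℓ = E k ℓ := by
      have h := congrFun (congrFun hAS k) ℓ
      simp only [sub_apply, one_apply_ne hkℓ, sub_zero, hA.mul_apply_left,
        hB.mul_apply_right] at h
      linear_combination h
    by_cases hE0 : E k ℓ = 0
    · left
      rw [hE0, mul_eq_zero, sub_eq_zero] at hEkℓ
      exact ⟨k, (hEkℓ.resolve_right hSkℓ).symm⟩
    · right; right
      have h := congrFun (congrFun hE k) ℓ
      rw [(hA.sub hB).mul_apply_right, neg_apply, sub_apply] at h
      have h' : E k ℓ * (A ℓ ℓ - B ℓ ℓ + 1) = 0 := by linear_combination h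
      linear_combination -(mul_eq_zero.mp h').resolve_left hE0
  · right
    push Not at hoff
    have hSℓ : S ℓ ℓ * S ℓ ℓ = 1 := by
      have h := congrFun (congrFun hS ℓ) ℓ
      rwa [mul_apply, one_apply_eq, Finset.sum_eq_single ℓ
        (fun k _ hk => by rw [hoff k hk, mul_zero]) (by simp)] at h
    have h : (A ℓ ℓ - B ℓ ℓ - 1) * (A ℓ ℓ - B ℓ ℓ + 1) = 0 := by
      linear_combination (S ℓ ℓ * (A ℓ ℓ - B ℓ ℓ) - 1) * hx - (A ℓ ℓ - B ℓ ℓ) ^ 2 * hSℓ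
    rcases mul_eq_zero.mp h with h | h
    · left; linear_combination -h
    · right; linear_combination -h

theorem exists_int_diag_of_relations (hA : A.IsDiag) (hB : B.IsDiag)
    (hSA : S * A - B * S = -E - 1) (hAS : A * S - S * B = E - 1) (hS : S * S = 1)
    (hE : E * (A - B) = -E) (hAint : ∀ k, ∃ m : ℤ, A k k = m) (ℓ : ι) :
    ∃ m : ℤ, B ℓ ℓ = m := by
  obtain ⟨m, hm⟩ := hAint ℓ
  rcases diag_eq_or_eq_sub_one_or_eq_add_one hA hB hSA hAS hS hE ℓ with ⟨k, hk⟩ | h | h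
  · obtain ⟨m', hm'⟩ := hAint k
    exact ⟨m', hk.trans hm'⟩
  · exact ⟨m - 1, by rw [h, hm]; push_cast; ring⟩
  · exact ⟨m + 1, by rw [h, hm]; push_cast; ring⟩

end Matrix

namespace Periplectic

section Relations

variable {n i : ℕ}

theorem ss_mul_ss (hi : 1 ≤ i) (hin : i ≤ n - 1) : ss n i * ss n i = 1 := by
  simpa [ss, hi, hin, sgen] using RingQuot.mkAlgHom_rel ℂ (Rel.s_sq i ⟨hi, hin⟩)

theorem ss_mul_yy_sub_yy_mul_ss (hi : 1 ≤ i) (hin : i ≤ n - 1) :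
    ss n i * yy n i - yy n (i + 1) * ss n i = -ee n i - 1 := by
  simpa [ss, ee, yy, sgen, egen, ygen, hi, hin, show i ≤ n by omega, show i + 1 ≤ n by omega]
    using RingQuot.mkAlgHom_rel ℂ (Rel.sy_rel i ⟨hi, hin⟩ ⟨hi, by omega⟩ ⟨by omega, by omega⟩)

theorem yy_mul_ss_sub_ss_mul_yy (hi : 1 ≤ i) (hin : i ≤ n - 1) :
    yy n i * ss n i - ss n i * yy n (i + 1) = ee n i - 1 := by
  simpa [ss, ee, yy, sgen, egen, ygen, hi, hin, show i ≤ n by omega, show i + 1 ≤ n by omega]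
    using RingQuot.mkAlgHom_rel ℂ (Rel.ys_rel i ⟨hi, hin⟩ ⟨hi, by omega⟩ ⟨by omega, by omega⟩)

theorem ee_mul_yy_sub_yy (hi : 1 ≤ i) (hin : i ≤ n - 1) :
    ee n i * (yy n i - yy n (i + 1)) = -ee n i := by
  simpa [ee, yy, egen, ygen, hi, hin, show i ≤ n by omega, show i + 1 ≤ n by omega]
    using RingQuot.mkAlgHom_rel ℂ (Rel.e_ydiff i ⟨hi, hin⟩ ⟨hi, by omega⟩ ⟨by omega, by omega⟩)

end Relations

namespace IsCalibrated

variable {n d i : ℕ} {ρ : sVV n →ₐ[ℂ] Matrix (Fin d) (Fin d) ℂ}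

theorem diag_yy_ne_succ (hcal : IsCalibrated ρ) (hi : 1 ≤ i) (hin : i ≤ n - 1) (ℓ : Fin d) :
    ρ (yy n i) ℓ ℓ ≠ ρ (yy n (i + 1)) ℓ ℓ :=
  Matrix.diag_ne_of_relations (hcal i hi (by omega)) (hcal (i + 1) (by omega) (by omega))
    (by simpa only [map_sub, map_mul, map_neg, map_one] using
      congrArg ρ (ss_mul_yy_sub_yy_mul_ss hi hin))
    (by simpa only [map_sub, map_mul, map_one] using
      congrArg ρ (yy_mul_ss_sub_ss_mul_yy hi hin)) ℓ

theorem exists_int_diag_yy_succ (hcal : IsCalibrated ρ) (hi : 1 ≤ i) (hin : i ≤ n - 1)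
    (hint : ∀ k, ∃ m : ℤ, ρ (yy n i) k k = m) (ℓ : Fin d) :
    ∃ m : ℤ, ρ (yy n (i + 1)) ℓ ℓ = m :=
  Matrix.exists_int_diag_of_relations (hcal i hi (by omega)) (hcal (i + 1) (by omega) (by omega))
    (by simpa only [map_sub, map_mul, map_neg, map_one] using
      congrArg ρ (ss_mul_yy_sub_yy_mul_ss hi hin))
    (by simpa only [map_sub, map_mul, map_one] using
      congrArg ρ (yy_mul_ss_sub_ss_mul_yy hi hin))
    (by simpa only [map_mul, map_one] using congrArg ρ (ss_mul_ss hi hin))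
    (by simpa only [map_sub, map_mul, map_neg] using congrArg ρ (ee_mul_yy_sub_yy hi hin))
    hint ℓ

end IsCalibrated

theorem calibrated_An_eigenvalues_general (n d : ℕ)
    (ρ : sVV n →ₐ[ℂ] Matrix (Fin d) (Fin d) ℂ) (hcal : IsCalibrated ρ)
    (h1 : ρ (yy n 1) = 0) :
    (∀ j : ℕ, 2 ≤ j → j ≤ n → ∀ ℓ : Fin d, ∃ m : ℤ, ρ (yy n j) ℓ ℓ = (m : ℂ)) ∧
    (∀ j : ℕ, 1 ≤ j → j ≤ n - 1 → ∀ ℓ : Fin d,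
      ρ (yy n j) ℓ ℓ ≠ ρ (yy n (j+1)) ℓ ℓ) := by
  have hint : ∀ j, 1 ≤ j → j ≤ n → ∀ ℓ : Fin d, ∃ m : ℤ, ρ (yy n j) ℓ ℓ = m := by
    intro j hj
    induction j, hj using Nat.le_induction with
    | base => exact fun _ _ => ⟨0, by simp [h1]⟩
    | succ j hj ih =>
      exact fun hjn => hcal.exists_int_diag_yy_succ hj (by omega) (ih (by omega))
  exact ⟨fun j hj hjn => hint j (by omega) hjn, fun j hj hjn => hcal.diag_yy_ne_succ hj hjn⟩

/-- In a calibrated representation of `sVV n` with `ρ(y_1) = 0` (i.e. a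
calibrated representation of the periplectic Brauer algebra, with `ρ(y_j)` realizing the
Jucys–Murphy element `Y_j`), all diagonal entries of `ρ(y_j)` are integers for `j = 2, …, n`,
and consecutive diagonal entries differ:
`(ρ(y_j))_{ℓℓ} ≠ (ρ(y_{j+1}))_{ℓℓ}` for `1 ≤ j ≤ n-1`. -/
theorem calibrated_An_eigenvalues (n d : ℕ) (hn : 2 ≤ n) (hd : 1 ≤ d)
    (ρ : sVV n →ₐ[ℂ] Matrix (Fin d) (Fin d) ℂ) (hcal : IsCalibrated ρ)
    (h1 : ρ (yy n 1) = 0) :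
    (∀ j : ℕ, 2 ≤ j → j ≤ n → ∀ ℓ : Fin d, ∃ m : ℤ, ρ (yy n j) ℓ ℓ = (m : ℂ)) ∧
    (∀ j : ℕ, 1 ≤ j → j ≤ n - 1 → ∀ ℓ : Fin d,
      ρ (yy n j) ℓ ℓ ≠ ρ (yy n (j+1)) ℓ ℓ) :=
  calibrated_An_eigenvalues_general n d ρ hcal h1

end Periplectic
end
end
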